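/- arXiv:2604.05441 — 8 statements merged into one kernel-verified Lean document; each statement's English description precedes it below -/
import Mathlib

section
/- Let α satisfy assumptions (I)–(III) with degeneracy parameter μ. If 0 ≤ μ < 1, then the function x ↦ 1/α(x) is integrable on (x₀, ℓ), i.e. α⁻¹ ∈ L¹(x₀,ℓ). -/
open MeasureTheory Set Filter Topology

/-- Assumptions (I)-(III) on the degenerate weight `α` on `[x₀, ℓ]`, with degeneracy
parameter `μ`: `α` is positive on `(x₀, ℓ]` and vanishes at `x₀`; `α` is continuous on
`[x₀, ℓ]` and `C¹` on `(x₀, ℓ]` with derivative `α'`; and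
`μ = sup_{x₀ < x ≤ ℓ} (x - x₀)|α'(x)|/α(x) = lim_{x → x₀⁺} (x - x₀)|α'(x)|/α(x) < 2`. -/
def DegWeight (x₀ ℓ μ : ℝ) (α α' : ℝ → ℝ) : Prop :=
  (∀ x ∈ Ioc x₀ ℓ, 0 < α x) ∧ α x₀ = 0 ∧
  ContinuousOn α (Icc x₀ ℓ) ∧
  (∀ x ∈ Ioc x₀ ℓ, HasDerivWithinAt α (α' x) (Ioc x₀ ℓ) x) ∧
  ContinuousOn α' (Ioc x₀ ℓ) ∧
  IsLUB ((fun x => (x - x₀) * |α' x| / α x) '' Ioc x₀ ℓ) μ ∧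
  Tendsto (fun x => (x - x₀) * |α' x| / α x) (𝓝[>] x₀) (𝓝 μ) ∧
  μ < 2

/-- If `α` satisfies (I)-(III) with degeneracy parameter `μ` and
`0 ≤ μ < 1`, then `α⁻¹ ∈ L¹(x₀, ℓ)`. -/
theorem weight_inv_integrable (x₀ ℓ μ : ℝ) (α α' : ℝ → ℝ) (hxl : x₀ < ℓ)
    (h : DegWeight x₀ ℓ μ α α') (hμ0 : 0 ≤ μ) (hμ1 : μ < 1) :
    IntegrableOn (fun x => (α x)⁻¹) (Ioo x₀ ℓ) volume := by
  obtain ⟨hpos, hα0, hcont, hderiv, hcont', hlub, _, _⟩ := h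
  have hbound : ∀ x ∈ Ioc x₀ ℓ, (x - x₀) * |α' x| / α x ≤ μ := fun x hx =>
    hlub.1 (mem_image_of_mem _ hx)
  have hℓmem : ℓ ∈ Ioc x₀ ℓ := ⟨hxl, le_refl _⟩
  have hαℓ : 0 < α ℓ := hpos ℓ hℓmem
  have hℓx : (0:ℝ) < ℓ - x₀ := sub_pos.2 hxl
  set C : ℝ := α ℓ / (ℓ - x₀) ^ μ with hC
  have hCpos : 0 < C := div_pos hαℓ (Real.rpow_pos_of_pos hℓx _)
  -- the function g
  set g : ℝ → ℝ := fun x => Real.log (α x) - μ * Real.log (x - x₀) with hg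
  -- key pointwise bound
  have key : ∀ y ∈ Ioc x₀ ℓ, C * (y - x₀) ^ μ ≤ α y := by
    intro y hy
    have hyx : (0:ℝ) < y - x₀ := sub_pos.2 hy.1
    have hsub1 : Icc y ℓ ⊆ Ioc x₀ ℓ := fun z hz => ⟨lt_of_lt_of_le hy.1 hz.1, hz.2⟩
    have hsub2 : Icc y ℓ ⊆ Icc x₀ ℓ := fun z hz => ⟨le_trans hy.1.le hz.1, hz.2⟩
    have hdg : ∀ x ∈ Ioo y ℓ, HasDerivAt g (α' x / α x - μ * (1 / (x - x₀))) x := by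
      intro x hx
      have hxm : x ∈ Ioc x₀ ℓ := ⟨lt_trans hy.1 hx.1, hx.2.le⟩
      have hαx : 0 < α x := hpos x hxm
      have hxx : (0:ℝ) < x - x₀ := sub_pos.2 hxm.1
      have hda : HasDerivAt α (α' x) x :=
        (hderiv x hxm).hasDerivAt (Ioc_mem_nhds hxm.1 hx.2)
      refine HasDerivAt.sub (hda.log hαx.ne') ?_
      have h1 : HasDerivAt (fun z : ℝ => z - x₀) 1 x := (hasDerivAt_id x).sub_const x₀
      simpa using (h1.log hxx.ne').const_mul μ
    have hanti : AntitoneOn g (Icc y ℓ) := by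
      apply antitoneOn_of_deriv_nonpos (convex_Icc y ℓ)
      · apply ContinuousOn.sub
        · exact (hcont.mono hsub2).log fun z hz => (hpos z (hsub1 hz)).ne'
        · refine continuousOn_const.mul (ContinuousOn.log ?_ ?_)
          · exact (continuousOn_id.sub continuousOn_const)
          · intro z hz
            have hz' : x₀ < z := lt_of_lt_of_le hy.1 hz.1
            exact sub_ne_zero.2 hz'.ne'
      · intro x hx
        rw [interior_Icc] at hx
        exact ((hdg x hx).differentiableAt).differentiableWithinAt
      · intro x hx
        rw [interior_Icc] at hx
        have hxm : x ∈ Ioc x₀ ℓ := ⟨lt_trans hy.1 hx.1, hx.2.le⟩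
        have hαx : 0 < α x := hpos x hxm
        have hxx : (0:ℝ) < x - x₀ := sub_pos.2 hxm.1
        rw [(hdg x hx).deriv]
        have h2 : (x - x₀) * |α' x| ≤ μ * α x := by
          have := hbound x hxm
          rwa [div_le_iff₀ hαx] at this
        have h3 : α' x / α x ≤ μ / (x - x₀) := by
          rw [div_le_div_iff₀ hαx hxx]
          have : α' x ≤ |α' x| := le_abs_self _
          nlinarith
        have h4 : μ * (1 / (x - x₀)) = μ / (x - x₀) := by ring
        rw [h4]
        linarith
    have hgyl : g ℓ ≤ g y := hanti (left_mem_Icc.2 hy.2) (right_mem_Icc.2 hy.2) hy.2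
    have hgℓ : g ℓ = Real.log C := by
      rw [hg, hC, Real.log_div hαℓ.ne' (Real.rpow_pos_of_pos hℓx μ).ne',
        Real.log_rpow hℓx]
    have hlog : Real.log (C * (y - x₀) ^ μ) ≤ Real.log (α y) := by
      rw [Real.log_mul hCpos.ne' (Real.rpow_pos_of_pos hyx μ).ne', Real.log_rpow hyx]
      have := hgyl
      rw [hgℓ] at this
      simp only [hg] at this
      linarith
    have hposL : 0 < C * (y - x₀) ^ μ := mul_pos hCpos (Real.rpow_pos_of_pos hyx μ)
    exact (Real.log_le_log_iff hposL (hpos y hy)).1 hlog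
  -- the dominating function is integrable
  have hint : IntegrableOn (fun y => C⁻¹ * (y - x₀) ^ (-μ)) (Ioo x₀ ℓ) volume := by
    have h1 : IntervalIntegrable (fun x : ℝ => x ^ (-μ)) volume 0 (ℓ - x₀) :=
      intervalIntegral.intervalIntegrable_rpow' (by linarith)
    have h2 := h1.comp_sub_right x₀
    simp only [zero_add, sub_add_cancel] at h2
    have h3 : IntegrableOn (fun y : ℝ => (y - x₀) ^ (-μ)) (Ioc x₀ ℓ) volume := by
      rw [intervalIntegrable_iff_integrableOn_Ioc_of_le hxl.le] at h2
      exact h2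
    exact ((h3.mono_set Ioo_subset_Ioc_self).const_mul _)
  -- conclude by domination
  have hmeas : AEStronglyMeasurable (fun x => (α x)⁻¹) (volume.restrict (Ioo x₀ ℓ)) := by
    have hco : ContinuousOn (fun x => (α x)⁻¹) (Ioo x₀ ℓ) := by
      refine ContinuousOn.inv₀ (hcont.mono ?_) ?_
      · exact fun z hz => ⟨hz.1.le, hz.2.le⟩
      · exact fun z hz => (hpos z ⟨hz.1, hz.2.le⟩).ne'
    exact hco.aestronglyMeasurable measurableSet_Ioo
  refine hint.mono' hmeas ?_
  filter_upwards [ae_restrict_mem measurableSet_Ioo] with y hy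
  have hy' : y ∈ Ioc x₀ ℓ := ⟨hy.1, hy.2.le⟩
  have hαy : 0 < α y := hpos y hy'
  have hyx : (0:ℝ) < y - x₀ := sub_pos.2 hy.1
  rw [Real.norm_eq_abs, abs_of_pos (inv_pos.2 hαy)]
  have heq : C⁻¹ * (y - x₀) ^ (-μ) = (C * (y - x₀) ^ μ)⁻¹ := by
    rw [Real.rpow_neg hyx.le, mul_inv]
  rw [heq]
  exact inv_anti₀ (mul_pos hCpos (Real.rpow_pos_of_pos hyx μ)) (key y hy')
end

section
/- Let α satisfy assumptions (I)–(III) with degeneracy parameter μ. Then for every u ∈ V¹_α(x₀,ℓ) one has ∫_{x₀}^{ℓ} |u(x) − u(ℓ)|² dx ≤ ((ℓ − x₀)² / ((2 − μ)·α(ℓ))) · ∫_{x₀}^{ℓ} α(x)|u'(x)|² dx. -/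
open MeasureTheory Set Filter Topology

/-- `u ∈ V¹_α(x₀, ℓ)` (real-valued): `u ∈ L²(x₀, ℓ)`, `u` is locally absolutely continuous
on `(x₀, ℓ]` with a.e. derivative `u'` (expressed via the fundamental theorem of calculus on
compact subintervals of `(x₀, ℓ]`), and `√α · u' ∈ L²(x₀, ℓ)`. -/
def MemV1 (x₀ ℓ : ℝ) (α u u' : ℝ → ℝ) : Prop :=
  MemLp u 2 (volume.restrict (Ioo x₀ ℓ)) ∧
  (∀ x y : ℝ, x₀ < x → x ≤ y → y ≤ ℓ →
    IntervalIntegrable u' volume x y ∧ u y - u x = ∫ t in x..y, u' t) ∧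
  MemLp (fun x => Real.sqrt (α x) * u' x) 2 (volume.restrict (Ioo x₀ ℓ))

theorem sq_integral_le_integral_inv_mul_integral_mul_sq {X : Type*} [MeasurableSpace X]
    {m : Measure X} {w f : X → ℝ} (hw : ∀ᵐ x ∂m, 0 < w x)
    (hw_inv : Integrable (fun x => (w x)⁻¹) m) (hwf : MemLp (fun x => √(w x) * f x) 2 m) :
    (∫ x, f x ∂m) ^ 2 ≤ (∫ x, (w x)⁻¹ ∂m) * ∫ x, w x * f x ^ 2 ∂m := by
  set F : X → ℝ := fun x => √(w x)⁻¹
  set G : X → ℝ := fun x => √(w x) * f x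
  have hF_sq : (fun x => F x ^ 2) =ᵐ[m] fun x => (w x)⁻¹ := by
    filter_upwards [hw] with x hx using Real.sq_sqrt (inv_nonneg.2 hx.le)
  have hF : MemLp F 2 m :=
    (memLp_two_iff_integrable_sq
      (Real.continuous_sqrt.comp_aestronglyMeasurable hw_inv.aestronglyMeasurable)).2
      (hw_inv.congr hF_sq.symm)
  have hf_eq : (fun x => ‖f x‖) =ᵐ[m] fun x => ‖F x‖ * ‖G x‖ := by
    filter_upwards [hw] with x hx
    rw [show F x = (√(w x))⁻¹ from Real.sqrt_inv _, norm_mul, norm_inv,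
      Real.norm_of_nonneg (Real.sqrt_nonneg _), inv_mul_cancel_left₀ (Real.sqrt_pos.2 hx).ne']
  have hF_int : ∫ x, ‖F x‖ ^ (2 : ℝ) ∂m = ∫ x, (w x)⁻¹ ∂m :=
    integral_congr_ae (by filter_upwards [hF_sq] with x hx; simpa [Real.rpow_two] using hx)
  have hG_int : ∫ x, ‖G x‖ ^ (2 : ℝ) ∂m = ∫ x, w x * f x ^ 2 ∂m :=
    integral_congr_ae (by filter_upwards [hw] with x hx; simp [G, mul_pow, Real.sq_sqrt hx.le])
  have holder := integral_mul_norm_le_Lp_mul_Lq Real.HolderConjugate.two_two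
    (by rwa [ENNReal.ofReal_ofNat]) (by rwa [ENNReal.ofReal_ofNat] : MemLp G (ENNReal.ofReal 2) m)
  rw [hF_int, hG_int, ← integral_congr_ae hf_eq] at holder
  have hA : 0 ≤ ∫ x, (w x)⁻¹ ∂m := integral_nonneg_of_ae <| by
    filter_upwards [hw] with x hx using inv_nonneg.2 hx.le
  have hB : 0 ≤ ∫ x, w x * f x ^ 2 ∂m := integral_nonneg_of_ae <| by
    filter_upwards [hw] with x hx using mul_nonneg hx.le (sq_nonneg _)
  calc (∫ x, f x ∂m) ^ 2 ≤ (∫ x, ‖f x‖ ∂m) ^ 2 := by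
        rw [← sq_abs]; exact pow_le_pow_left₀ (abs_nonneg _) (abs_integral_le_integral_abs) 2
    _ ≤ ((∫ x, (w x)⁻¹ ∂m) ^ (1 / 2 : ℝ) * (∫ x, w x * f x ^ 2 ∂m) ^ (1 / 2 : ℝ)) ^ 2 :=
        pow_le_pow_left₀ (integral_nonneg fun _ => norm_nonneg _) holder 2
    _ = _ := by
        rw [mul_pow, ← Real.sqrt_eq_rpow, ← Real.sqrt_eq_rpow, Real.sq_sqrt hA, Real.sq_sqrt hB]

theorem integral_sub_rpow_neg {x₀ x ℓ ν : ℝ} (hx : x₀ < x) (hℓ : x₀ < ℓ) (hν : ν ≠ 1) :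
    ∫ t in x..ℓ, (t - x₀) ^ (-ν) = ((ℓ - x₀) ^ (1 - ν) - (x - x₀) ^ (1 - ν)) / (1 - ν) := by
  rw [intervalIntegral.integral_comp_sub_right (fun t => t ^ (-ν)),
    integral_rpow (Or.inr ⟨fun h => hν (by linarith),
      notMem_uIcc_of_lt (by linarith) (by linarith)⟩), neg_add_eq_sub]

theorem intervalIntegrable_sub_rpow {x₀ ℓ r : ℝ} (hr : -1 < r) :
    IntervalIntegrable (fun x => (x - x₀) ^ r) volume x₀ ℓ := by
  simpa using
    (intervalIntegral.intervalIntegrable_rpow' hr (a := 0) (b := ℓ - x₀)).comp_sub_right x₀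

theorem integral_sub_rpow {x₀ ℓ r : ℝ} (hr : -1 < r) :
    ∫ x in x₀..ℓ, (x - x₀) ^ r = (ℓ - x₀) ^ (r + 1) / (r + 1) := by
  rw [intervalIntegral.integral_comp_sub_right (fun t => t ^ r), sub_self,
    integral_rpow (Or.inl hr), Real.zero_rpow (by linarith), sub_zero]

-- The integrand is `∫ t in x..ℓ, (t - x₀) ^ (-ν)`, by `integral_sub_rpow_neg`.
theorem integral_tail_rpow {x₀ ℓ ν : ℝ} (hℓ : x₀ ≤ ℓ) (hν2 : ν < 2) (hν1 : ν ≠ 1) :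
    ∫ x in x₀..ℓ, ((ℓ - x₀) ^ (1 - ν) - (x - x₀) ^ (1 - ν)) / (1 - ν) =
      (ℓ - x₀) ^ (2 - ν) / (2 - ν) := by
  have h1ν : 1 - ν ≠ 0 := sub_ne_zero.2 hν1.symm
  have h2ν : 2 - ν ≠ 0 := by linarith
  rw [intervalIntegral.integral_div, intervalIntegral.integral_sub intervalIntegrable_const
    (intervalIntegrable_sub_rpow (by linarith)), intervalIntegral.integral_const,
    integral_sub_rpow (by linarith), smul_eq_mul, show 1 - ν + 1 = 2 - ν by ring]
  have hsplit : (ℓ - x₀) ^ (2 - ν) = (ℓ - x₀) * (ℓ - x₀) ^ (1 - ν) := by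
    rw [show 2 - ν = 1 + (1 - ν) by ring, Real.rpow_add' (sub_nonneg.2 hℓ) (by linarith),
      Real.rpow_one]
  rw [hsplit]
  field_simp
  ring

section

variable {x₀ ℓ ν : ℝ} {α α' u u' : ℝ → ℝ}

theorem antitoneOn_mul_sub_rpow_neg
    (hα : ∀ x ∈ Ioc x₀ ℓ, HasDerivWithinAt α (α' x) (Ioc x₀ ℓ) x)
    (hν : ∀ x ∈ Ioo x₀ ℓ, (x - x₀) * α' x ≤ ν * α x) :
    AntitoneOn (fun x => α x * (x - x₀) ^ (-ν)) (Ioc x₀ ℓ) := by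
  have hpow : ∀ x, x₀ < x → HasDerivAt (fun x => (x - x₀) ^ (-ν))
      (-ν * (x - x₀) ^ (-ν - 1)) x := fun x hx => by
    simpa using ((hasDerivAt_id x).sub_const x₀).rpow_const (p := -ν) (Or.inl (by simp; linarith))
  refine antitoneOn_of_hasDerivWithinAt_nonpos (convex_Ioc x₀ ℓ)
    (f' := fun x => α' x * (x - x₀) ^ (-ν) + α x * (-ν * (x - x₀) ^ (-ν - 1))) ?_ ?_ ?_
  · exact fun x hx => ((hα x hx).continuousWithinAt).mul
      (hpow x hx.1).continuousAt.continuousWithinAt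
  · rw [interior_Ioc]
    intro x hx
    exact (((hα x (Ioo_subset_Ioc_self hx)).hasDerivAt (Ioc_mem_nhds hx.1 hx.2)).mul
      (hpow x hx.1)).hasDerivWithinAt
  · rw [interior_Ioc]
    intro x hx
    have hs : 0 < x - x₀ := sub_pos.2 hx.1
    have : α' x * (x - x₀) ^ (-ν) + α x * (-ν * (x - x₀) ^ (-ν - 1)) =
        (x - x₀) ^ (-ν) / (x - x₀) * ((x - x₀) * α' x - ν * α x) := by
      rw [Real.rpow_sub_one hs.ne']; field_simp; ring
    rw [this]
    exact mul_nonpos_of_nonneg_of_nonpos (by positivity) (sub_nonpos.2 (hν x hx))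

theorem inv_le_rpow_neg_of_antitoneOn (hpos : ∀ x ∈ Ioc x₀ ℓ, 0 < α x)
    (hanti : AntitoneOn (fun x => α x * (x - x₀) ^ (-ν)) (Ioc x₀ ℓ)) {t : ℝ}
    (ht : t ∈ Ioc x₀ ℓ) :
    (α t)⁻¹ ≤ (ℓ - x₀) ^ ν / α ℓ * (t - x₀) ^ (-ν) := by
  have hℓ : ℓ ∈ Ioc x₀ ℓ := ⟨ht.1.trans_le ht.2, le_rfl⟩
  have hs : 0 < (t - x₀) ^ (-ν) := Real.rpow_pos_of_pos (sub_pos.2 ht.1) _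
  have hc : 0 < ℓ - x₀ := sub_pos.2 hℓ.1
  have hαt := hpos t ht
  calc (α t)⁻¹ = (t - x₀) ^ (-ν) / (α t * (t - x₀) ^ (-ν)) := by field_simp
    _ ≤ (t - x₀) ^ (-ν) / (α ℓ * (ℓ - x₀) ^ (-ν)) :=
      div_le_div_of_nonneg_left hs.le (by have := hpos ℓ hℓ; positivity) (hanti ht hℓ ht.2)
    _ = (ℓ - x₀) ^ ν / α ℓ * (t - x₀) ^ (-ν) := by
      rw [Real.rpow_neg hc.le]; field_simp

theorem integral_inv_le_of_antitoneOn (hpos : ∀ x ∈ Ioc x₀ ℓ, 0 < α x)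
    (hα : ContinuousOn α (Ioc x₀ ℓ))
    (hanti : AntitoneOn (fun x => α x * (x - x₀) ^ (-ν)) (Ioc x₀ ℓ)) (hν : ν ≠ 1) {x : ℝ}
    (hx : x ∈ Ioo x₀ ℓ) :
    ∫ t in x..ℓ, (α t)⁻¹ ≤
      (ℓ - x₀) ^ ν / α ℓ * (((ℓ - x₀) ^ (1 - ν) - (x - x₀) ^ (1 - ν)) / (1 - ν)) := by
  have hsub : Icc x ℓ ⊆ Ioc x₀ ℓ := Icc_subset_Ioc_iff hx.2.le |>.2 ⟨hx.1, le_rfl⟩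
  rw [← integral_sub_rpow_neg hx.1 (hx.1.trans hx.2) hν, ← intervalIntegral.integral_const_mul]
  refine intervalIntegral.integral_mono_on hx.2.le ?_ ?_
    fun t ht => inv_le_rpow_neg_of_antitoneOn hpos hanti (hsub ht)
  · exact ((hα.mono hsub).inv₀ fun t ht => (hpos t (hsub ht)).ne').intervalIntegrable_of_Icc
      hx.2.le
  · refine (continuousOn_const.mul ?_).intervalIntegrable_of_Icc hx.2.le
    exact ContinuousOn.rpow_const (continuousOn_id.sub continuousOn_const)
      fun t ht => Or.inl (sub_ne_zero.2 (hsub ht).1.ne')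

theorem sq_sub_le_integral_inv_mul (hpos : ∀ x ∈ Ioc x₀ ℓ, 0 < α x)
    (hα : ContinuousOn α (Ioc x₀ ℓ)) (hu : MemV1 x₀ ℓ α u u') {x : ℝ} (hx : x ∈ Ioo x₀ ℓ) :
    (u x - u ℓ) ^ 2 ≤ (∫ t in x..ℓ, (α t)⁻¹) * ∫ t in Ioo x₀ ℓ, α t * u' t ^ 2 := by
  have hsub : Ioo x ℓ ⊆ Ioo x₀ ℓ := Ioo_subset_Ioo_left hx.1.le
  have hpos' : ∀ t ∈ Icc x ℓ, 0 < α t := fun t ht => hpos t ⟨hx.1.trans_le ht.1, ht.2⟩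
  have hcs := sq_integral_le_integral_inv_mul_integral_mul_sq (m := volume.restrict (Ioo x ℓ))
    (f := u')
    (ae_restrict_of_forall_mem measurableSet_Ioo fun t ht => hpos' t (Ioo_subset_Icc_self ht))
    (((hα.mono fun t ht => ⟨hx.1.trans_le ht.1, ht.2⟩).inv₀
      fun t ht => (hpos' t ht).ne').integrableOn_Icc.mono_set Ioo_subset_Icc_self)
    (hu.2.2.mono_measure (Measure.restrict_mono hsub le_rfl))
  have hint : IntegrableOn (fun t => α t * u' t ^ 2) (Ioo x₀ ℓ) := by
    refine hu.2.2.integrable_sq.congr (ae_restrict_of_forall_mem measurableSet_Ioo fun t ht => ?_)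
    simp only [mul_pow, Real.sq_sqrt (hpos t (Ioo_subset_Ioc_self ht)).le]
  calc (u x - u ℓ) ^ 2 = (∫ t in Ioo x ℓ, u' t) ^ 2 := by
        rw [← neg_sub, neg_sq, (hu.2.1 x ℓ hx.1 hx.2.le le_rfl).2,
          intervalIntegral.integral_of_le hx.2.le, integral_Ioc_eq_integral_Ioo]
    _ ≤ (∫ t in Ioo x ℓ, (α t)⁻¹) * ∫ t in Ioo x ℓ, α t * u' t ^ 2 := hcs
    _ ≤ (∫ t in x..ℓ, (α t)⁻¹) * ∫ t in Ioo x₀ ℓ, α t * u' t ^ 2 := by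
        rw [intervalIntegral.integral_of_le hx.2.le, integral_Ioc_eq_integral_Ioo]
        refine mul_le_mul_of_nonneg_left (setIntegral_mono_set hint ?_ hsub.eventuallyLE)
          (setIntegral_nonneg measurableSet_Ioo
            fun t ht => inv_nonneg.2 (hpos' t (Ioo_subset_Icc_self ht)).le)
        exact ae_restrict_of_forall_mem measurableSet_Ioo fun t ht =>
          mul_nonneg (hpos t (Ioo_subset_Ioc_self ht)).le (sq_nonneg _)

theorem integral_sq_sub_le_of_antitoneOn (hxl : x₀ < ℓ) (hpos : ∀ x ∈ Ioc x₀ ℓ, 0 < α x)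
    (hα : ContinuousOn α (Ioc x₀ ℓ))
    (hanti : AntitoneOn (fun x => α x * (x - x₀) ^ (-ν)) (Ioc x₀ ℓ)) (hν2 : ν < 2) (hν1 : ν ≠ 1)
    (hu : MemV1 x₀ ℓ α u u') :
    ∫ x in Ioo x₀ ℓ, (u x - u ℓ) ^ 2 ≤
      (ℓ - x₀) ^ 2 / ((2 - ν) * α ℓ) * ∫ x in Ioo x₀ ℓ, α x * u' x ^ 2 := by
  set I := ∫ x in Ioo x₀ ℓ, α x * u' x ^ 2
  set T : ℝ → ℝ := fun x => ((ℓ - x₀) ^ (1 - ν) - (x - x₀) ^ (1 - ν)) / (1 - ν)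
  have hI : 0 ≤ I := setIntegral_nonneg measurableSet_Ioo fun t ht =>
    mul_nonneg (hpos t (Ioo_subset_Ioc_self ht)).le (sq_nonneg _)
  have hbound : ∀ x ∈ Ioo x₀ ℓ, (u x - u ℓ) ^ 2 ≤ (ℓ - x₀) ^ ν / α ℓ * I * T x := fun x hx =>
    calc (u x - u ℓ) ^ 2 ≤ (∫ t in x..ℓ, (α t)⁻¹) * I := sq_sub_le_integral_inv_mul hpos hα hu hx
      _ ≤ (ℓ - x₀) ^ ν / α ℓ * T x * I :=
        mul_le_mul_of_nonneg_right (integral_inv_le_of_antitoneOn hpos hα hanti hν1 hx) hI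
      _ = (ℓ - x₀) ^ ν / α ℓ * I * T x := by ring
  have hQ : IntegrableOn (fun x => (u x - u ℓ) ^ 2) (Ioo x₀ ℓ) :=
    (hu.1.sub (memLp_const (u ℓ))).integrable_sq
  have hT : IntervalIntegrable T volume x₀ ℓ :=
    (intervalIntegrable_const.sub (intervalIntegrable_sub_rpow (by linarith))).div_const _
  have hc : 0 < ℓ - x₀ := sub_pos.2 hxl
  calc ∫ x in Ioo x₀ ℓ, (u x - u ℓ) ^ 2
      ≤ ∫ x in Ioo x₀ ℓ, (ℓ - x₀) ^ ν / α ℓ * I * T x :=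
        setIntegral_mono_on hQ ((hT.1.mono_set Ioo_subset_Ioc_self).const_mul _)
          measurableSet_Ioo hbound
    _ = (ℓ - x₀) ^ ν / α ℓ * I * ((ℓ - x₀) ^ (2 - ν) / (2 - ν)) := by
        rw [integral_const_mul, ← integral_Ioc_eq_integral_Ioo,
          ← intervalIntegral.integral_of_le hxl.le, integral_tail_rpow hxl.le hν2 hν1]
    _ = (ℓ - x₀) ^ 2 / ((2 - ν) * α ℓ) * I := by
        rw [show (ℓ - x₀) ^ (2 : ℕ) = (ℓ - x₀) ^ ν * (ℓ - x₀) ^ (2 - ν) by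
          rw [← Real.rpow_add hc, add_sub_cancel, Real.rpow_two]]
        simp only [div_eq_mul_inv, mul_inv]
        ring

end

/-- If `α` satisfies (I)-(III) with degeneracy parameter `μ`, then every
`u ∈ V¹_α(x₀, ℓ)` satisfies
`∫_{x₀}^{ℓ} |u(x) - u(ℓ)|² dx ≤ (ℓ - x₀)²/((2 - μ) α(ℓ)) · ∫_{x₀}^{ℓ} α(x)|u'(x)|² dx`. -/
theorem weighted_poincare (x₀ ℓ μ : ℝ) (α α' : ℝ → ℝ) (hxl : x₀ < ℓ)
    (h : DegWeight x₀ ℓ μ α α') (u u' : ℝ → ℝ) (hu : MemV1 x₀ ℓ α u u') :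
    ∫ x in Ioo x₀ ℓ, (u x - u ℓ) ^ 2 ≤
      (ℓ - x₀) ^ 2 / ((2 - μ) * α ℓ) * ∫ x in Ioo x₀ ℓ, α x * (u' x) ^ 2 := by
  obtain ⟨hpos, -, -, hderiv, -, hlub, -, hμ2⟩ := h
  have hα : ContinuousOn α (Ioc x₀ ℓ) := fun x hx => (hderiv x hx).continuousWithinAt
  have hkey : ∀ ν, μ < ν → ν < 2 → ν ≠ 1 → ∫ x in Ioo x₀ ℓ, (u x - u ℓ) ^ 2 ≤
      (ℓ - x₀) ^ 2 / ((2 - ν) * α ℓ) * ∫ x in Ioo x₀ ℓ, α x * (u' x) ^ 2 := by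
    refine fun ν hμν hν2 hν1 => integral_sq_sub_le_of_antitoneOn hxl hpos hα
      (antitoneOn_mul_sub_rpow_neg hderiv fun x hx => ?_) hν2 hν1 hu
    have hαx := hpos x (Ioo_subset_Ioc_self hx)
    have hsup := (div_le_iff₀ hαx).1 (hlub.1 ⟨x, Ioo_subset_Ioc_self hx, rfl⟩)
    nlinarith [le_abs_self (α' x), sub_pos.2 hx.1]
  -- At `ν = 1` the tail integral is logarithmic, so the bound is taken for `ν ≠ 1` and `ν ↓ μ`.
  have hν1 : ∀ᶠ ν in 𝓝[>] μ, ν ≠ 1 := by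
    rcases eq_or_ne μ 1 with rfl | hμ1
    · exact eventually_nhdsWithin_of_forall fun ν hν => ne_of_gt hν
    · exact eventually_ne_nhdsWithin hμ1
  have hlim : Tendsto
      (fun ν => (ℓ - x₀) ^ 2 / ((2 - ν) * α ℓ) * ∫ x in Ioo x₀ ℓ, α x * (u' x) ^ 2) (𝓝[>] μ)
      (𝓝 ((ℓ - x₀) ^ 2 / ((2 - μ) * α ℓ) * ∫ x in Ioo x₀ ℓ, α x * (u' x) ^ 2)) := by
    have : (2 - μ) * α ℓ ≠ 0 := mul_ne_zero (by linarith) (hpos ℓ ⟨hxl, le_rfl⟩).ne'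
    exact (ContinuousAt.tendsto (by fun_prop (disch := exact this))).mono_left nhdsWithin_le_nhds
  refine ge_of_tendsto hlim ?_
  filter_upwards [self_mem_nhdsWithin, hν1, eventually_nhdsWithin_of_eventually_nhds
    (eventually_lt_nhds hμ2)] with ν hμν hν1 hν2 using hkey ν hμν hν2 hν1
end

section
/- Let α satisfy assumptions (I)–(III) with degeneracy parameter μ. Then for every u ∈ V¹_α(x₀,ℓ) with u(ℓ) = 0 one has ∫_{x₀}^{ℓ} |u(x)|² dx ≤ C_α · ∫_{x₀}^{ℓ} α(x)|u'(x)|² dx, where C_α = max{ (ℓ − x₀)² / ((2 − μ)·α(ℓ)), 4(ℓ − x₀)^μ / α(ℓ) }. -/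
/-!
The bound `(x - x₀)|α'(x)| ≤ μ α(x)` makes `α(x) (x - x₀)^(-μ)` nonincreasing, whence
`1/α(t) ≤ (ℓ - x₀)^μ / α(ℓ) · (t - x₀)^(-μ)`. Since `u(ℓ) = 0`, Cauchy–Schwarz on `u(x) = -∫_x^ℓ u'`
gives `u(x)² ≤ (∫_x^ℓ 1/α) · ∫_{x₀}^ℓ α u'²`, and by Tonelli
`∫_{x₀}^ℓ ∫_x^ℓ dt/α(t) dx = ∫_{x₀}^ℓ (t - x₀)/α(t) dt ≤ (ℓ - x₀)² / ((2 - μ) α(ℓ))`,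
so the first term of the maximum already suffices.
For `μ ≥ 1` the integral `∫_{x₀}^ℓ 1/α` may diverge, which is why these estimates are carried out
with `ℝ≥0∞`-valued integrals.
-/

open MeasureTheory Set Filter Topology

open scoped ENNReal

theorem sq_lintegral_enorm_le_lintegral_inv_mul_lintegral_mul_sq {X : Type*}
    [MeasurableSpace X] {ν : Measure X} {w f : X → ℝ} (hw : AEMeasurable w ν)
    (hf : AEMeasurable f ν) (hpos : ∀ᵐ x ∂ν, 0 < w x) :
    (∫⁻ x, ‖f x‖ₑ ∂ν) ^ 2 ≤
      (∫⁻ x, ENNReal.ofReal (w x)⁻¹ ∂ν) * ∫⁻ x, ENNReal.ofReal (w x * f x ^ 2) ∂ν := by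
  set F : X → ℝ≥0∞ := fun x => ENNReal.ofReal (√(w x))⁻¹
  set G : X → ℝ≥0∞ := fun x => ENNReal.ofReal (√(w x) * |f x|)
  have hFm : AEMeasurable F ν := hw.sqrt.inv.ennreal_ofReal
  have hGm : AEMeasurable G ν := (hw.sqrt.mul hf.abs).ennreal_ofReal
  have hfactor : (fun x => ‖f x‖ₑ) =ᵐ[ν] F * G := by
    filter_upwards [hpos] with x hx
    rw [Pi.mul_apply, ← ENNReal.ofReal_mul (by positivity), ← mul_assoc,
      inv_mul_cancel₀ (Real.sqrt_pos.2 hx).ne', one_mul, Real.enorm_eq_ofReal_abs]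
  have hF : (fun x => F x ^ (2 : ℝ)) =ᵐ[ν] fun x => ENNReal.ofReal (w x)⁻¹ := by
    filter_upwards [hpos] with x hx
    rw [ENNReal.rpow_two, ← ENNReal.ofReal_pow (by positivity), inv_pow, Real.sq_sqrt hx.le]
  have hG : (fun x => G x ^ (2 : ℝ)) =ᵐ[ν] fun x => ENNReal.ofReal (w x * f x ^ 2) := by
    filter_upwards [hpos] with x hx
    rw [ENNReal.rpow_two, ← ENNReal.ofReal_pow (by positivity), mul_pow, Real.sq_sqrt hx.le,
      sq_abs]
  calc (∫⁻ x, ‖f x‖ₑ ∂ν) ^ 2 = (∫⁻ x, (F * G) x ∂ν) ^ 2 := by rw [lintegral_congr_ae hfactor]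
    _ ≤ ((∫⁻ x, F x ^ (2 : ℝ) ∂ν) ^ (1 / 2 : ℝ) *
          (∫⁻ x, G x ^ (2 : ℝ) ∂ν) ^ (1 / 2 : ℝ)) ^ 2 := by
      gcongr
      exact ENNReal.lintegral_mul_le_Lp_mul_Lq ν .two_two hFm hGm
    _ = (∫⁻ x, F x ^ (2 : ℝ) ∂ν) * ∫⁻ x, G x ^ (2 : ℝ) ∂ν := by
      simp only [mul_pow, ← ENNReal.rpow_natCast, ← ENNReal.rpow_mul]
      norm_num
    _ = _ := by rw [lintegral_congr_ae hF, lintegral_congr_ae hG]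

theorem lintegral_Ioo_lintegral_Ioo_eq_lintegral_mul_sub {a b : ℝ} {g : ℝ → ℝ≥0∞}
    (hg : AEMeasurable g (volume.restrict (Ioo a b))) :
    ∫⁻ x in Ioo a b, ∫⁻ t in Ioo x b, g t = ∫⁻ t in Ioo a b, g t * ENNReal.ofReal (t - a) := by
  have hinner : ∀ x ∈ Ioo a b, ∫⁻ t in Ioo x b, g t = ∫⁻ t in Ioo a b, (Ioi x).indicator g t := by
    intro x hx
    rw [setLIntegral_indicator measurableSet_Ioi, inter_comm, Ioo_inter_Ioi, max_eq_right hx.1.le]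
  have hswap : AEMeasurable (Function.uncurry fun x t => (Ioi x).indicator g t)
      ((volume.restrict (Ioo a b)).prod (volume.restrict (Ioo a b))) :=
    hg.comp_snd.indicator (measurableSet_lt measurable_fst measurable_snd)
  have houter : ∀ t ∈ Ioo a b,
      ∫⁻ x in Ioo a b, (Ioi x).indicator g t = g t * ENNReal.ofReal (t - a) := by
    intro t ht
    have hindicator : ∀ x, (Ioi x).indicator g t = (Iio t).indicator (fun _ => g t) x :=
      fun x => rfl
    simp_rw [hindicator]
    rw [setLIntegral_indicator measurableSet_Iio, inter_comm, Ioo_inter_Iio, min_eq_right ht.2.le,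
      setLIntegral_const, Real.volume_Ioo]
  rw [setLIntegral_congr_fun measurableSet_Ioo hinner, lintegral_lintegral_swap hswap,
    setLIntegral_congr_fun measurableSet_Ioo houter]

theorem lintegral_Ioo_ofReal_sub_rpow {a b r : ℝ} (hab : a ≤ b) (hr : -1 < r) :
    ∫⁻ t in Ioo a b, ENNReal.ofReal ((t - a) ^ r) =
      ENNReal.ofReal ((b - a) ^ (r + 1) / (r + 1)) := by
  have hint : IntegrableOn (fun t => (t - a) ^ r) (Ioo a b) := by
    have := (intervalIntegral.intervalIntegrable_rpow' (a := 0) (b := b - a) hr).comp_sub_right a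
    rw [zero_add, sub_add_cancel] at this
    exact (intervalIntegrable_iff_integrableOn_Ioo_of_le hab).1 this
  have hnonneg : 0 ≤ᵐ[volume.restrict (Ioo a b)] fun t => (t - a) ^ r :=
    (ae_restrict_iff' measurableSet_Ioo).2 (ae_of_all _ fun t ht => by
      have := sub_nonneg.2 ht.1.le; positivity)
  rw [← ofReal_integral_eq_lintegral_ofReal hint hnonneg, ← integral_Ioc_eq_integral_Ioo,
    ← intervalIntegral.integral_of_le hab,
    intervalIntegral.integral_comp_sub_right (fun t => t ^ r), sub_self,
    integral_rpow (Or.inl hr), Real.zero_rpow (by linarith), sub_zero]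

theorem antitoneOn_mul_rpow_neg_sub {α α' : ℝ → ℝ} {a b μ : ℝ}
    (hα : ∀ x ∈ Ioc a b, HasDerivWithinAt α (α' x) (Ioc a b) x)
    (hbound : ∀ x ∈ Ioc a b, (x - a) * α' x ≤ μ * α x) :
    AntitoneOn (fun x => α x * (x - a) ^ (-μ)) (Ioc a b) := by
  have hderiv : ∀ x ∈ Ioo a b, HasDerivAt (fun x => α x * (x - a) ^ (-μ))
      (α' x * (x - a) ^ (-μ) + α x * (-μ * (x - a) ^ (-μ - 1))) x := by
    intro x hx
    have hαx : HasDerivAt α (α' x) x :=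
      (hα x (Ioo_subset_Ioc_self hx)).hasDerivAt (Ioc_mem_nhds hx.1 hx.2)
    have hpow := ((hasDerivAt_id x).sub_const a).rpow_const (p := -μ)
      (Or.inl (sub_pos.2 hx.1).ne')
    exact (hαx.fun_mul hpow).congr_deriv (by simp)
  refine antitoneOn_of_deriv_nonpos (convex_Ioc a b) ?_ ?_ ?_
  · exact fun x hx => ((hα x hx).continuousWithinAt).mul
      ((continuousAt_id.sub continuousAt_const).rpow_const
        (Or.inl (sub_pos.2 hx.1).ne')).continuousWithinAt
  · rw [interior_Ioc]
    exact fun x hx => (hderiv x hx).differentiableAt.differentiableWithinAt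
  · rw [interior_Ioc]
    intro x hx
    have hxa : 0 < x - a := sub_pos.2 hx.1
    rw [(hderiv x hx).deriv]
    have hsplit : (x - a) ^ (-μ) = (x - a) ^ (-μ - 1) * (x - a) := by
      rw [← Real.rpow_add_one hxa.ne', sub_add_cancel]
    calc α' x * (x - a) ^ (-μ) + α x * (-μ * (x - a) ^ (-μ - 1))
        = ((x - a) * α' x - μ * α x) * (x - a) ^ (-μ - 1) := by rw [hsplit]; ring
      _ ≤ 0 := mul_nonpos_of_nonpos_of_nonneg (by linarith [hbound x (Ioo_subset_Ioc_self hx)])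
          (by positivity)

theorem inv_le_of_antitoneOn_mul_rpow_neg {α : ℝ → ℝ} {a b μ : ℝ}
    (hanti : AntitoneOn (fun x => α x * (x - a) ^ (-μ)) (Ioc a b))
    (hpos : ∀ x ∈ Ioc a b, 0 < α x) {t : ℝ} (ht : t ∈ Ioc a b) :
    (α t)⁻¹ ≤ (b - a) ^ μ / α b * (t - a) ^ (-μ) := by
  have hb : b ∈ Ioc a b := ⟨ht.1.trans_le ht.2, le_rfl⟩
  have hta : 0 < t - a := sub_pos.2 ht.1
  have hba : 0 < b - a := sub_pos.2 hb.1
  have h := hanti ht hb ht.2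
  have hαt := hpos t ht
  have hαb := hpos b hb
  have hP : 0 < (t - a) ^ μ := Real.rpow_pos_of_pos hta μ
  have hQ : 0 < (b - a) ^ μ := Real.rpow_pos_of_pos hba μ
  simp only [Real.rpow_neg hta.le, Real.rpow_neg hba.le] at h ⊢
  field_simp at h ⊢
  linarith

theorem enorm_intervalIntegral_sq_le {f w : ℝ → ℝ} {a b : ℝ} (hab : a ≤ b)
    (hf : IntervalIntegrable f volume a b) (hw : AEMeasurable w (volume.restrict (Ioo a b)))
    (hpos : ∀ t ∈ Ioo a b, 0 < w t) :
    ‖∫ t in a..b, f t‖ₑ ^ 2 ≤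
      (∫⁻ t in Ioo a b, ENNReal.ofReal (w t)⁻¹) *
        ∫⁻ t in Ioo a b, ENNReal.ofReal (w t * f t ^ 2) := by
  have hfm : AEMeasurable f (volume.restrict (Ioo a b)) :=
    ((intervalIntegrable_iff_integrableOn_Ioo_of_le hab).1 hf).aemeasurable
  calc ‖∫ t in a..b, f t‖ₑ ^ 2 ≤ (∫⁻ t in Ioo a b, ‖f t‖ₑ) ^ 2 := by
        rw [intervalIntegral.integral_of_le hab, integral_Ioc_eq_integral_Ioo]
        gcongr
        exact enorm_integral_le_lintegral_enorm _
    _ ≤ _ := sq_lintegral_enorm_le_lintegral_inv_mul_lintegral_mul_sq hw hfm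
        ((ae_restrict_iff' measurableSet_Ioo).2 (ae_of_all _ hpos))

theorem lintegral_inv_mul_sub_le {α : ℝ → ℝ} {a b μ : ℝ} (hab : a ≤ b) (hμ : μ < 2)
    (hαb : 0 ≤ α b) (hinv : ∀ t ∈ Ioo a b, (α t)⁻¹ ≤ (b - a) ^ μ / α b * (t - a) ^ (-μ)) :
    ∫⁻ t in Ioo a b, ENNReal.ofReal (α t)⁻¹ * ENNReal.ofReal (t - a) ≤
      ENNReal.ofReal ((b - a) ^ 2 / ((2 - μ) * α b)) := by
  have hK : 0 ≤ (b - a) ^ μ / α b := by have := sub_nonneg.2 hab; positivity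
  calc ∫⁻ t in Ioo a b, ENNReal.ofReal (α t)⁻¹ * ENNReal.ofReal (t - a)
      ≤ ∫⁻ t in Ioo a b, ENNReal.ofReal ((b - a) ^ μ / α b) *
          ENNReal.ofReal ((t - a) ^ (-μ + 1)) := by
        refine setLIntegral_mono' measurableSet_Ioo fun t ht => ?_
        have hta : 0 < t - a := sub_pos.2 ht.1
        rw [← ENNReal.ofReal_mul' hta.le, ← ENNReal.ofReal_mul hK, Real.rpow_add_one hta.ne',
          ← mul_assoc]
        exact ENNReal.ofReal_le_ofReal (mul_le_mul_of_nonneg_right (hinv t ht) hta.le)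
    _ = ENNReal.ofReal ((b - a) ^ μ / α b) * ENNReal.ofReal ((b - a) ^ (2 - μ) / (2 - μ)) := by
        rw [lintegral_const_mul' _ _ ENNReal.ofReal_ne_top,
          lintegral_Ioo_ofReal_sub_rpow hab (by linarith), show -μ + 1 + 1 = 2 - μ by ring]
    _ = ENNReal.ofReal ((b - a) ^ 2 / ((2 - μ) * α b)) := by
        rw [← ENNReal.ofReal_mul hK, div_mul_div_comm,
          ← Real.rpow_add' (sub_nonneg.2 hab) (by norm_num), add_sub_cancel, Real.rpow_two,
          mul_comm (α b)]

theorem integral_le_mul_integral_of_lintegral_le {X : Type*} [MeasurableSpace X]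
    {ν : Measure X} {f g : X → ℝ} {c : ℝ} (hf : 0 ≤ᵐ[ν] f) (hfm : AEStronglyMeasurable f ν)
    (hg : 0 ≤ᵐ[ν] g) (hgi : Integrable g ν) (hc : 0 ≤ c)
    (h : ∫⁻ x, ENNReal.ofReal (f x) ∂ν ≤ ENNReal.ofReal c * ∫⁻ x, ENNReal.ofReal (g x) ∂ν) :
    ∫ x, f x ∂ν ≤ c * ∫ x, g x ∂ν := by
  rw [integral_eq_lintegral_of_nonneg_ae hf hfm, integral_eq_lintegral_of_nonneg_ae hg hgi.1,
    ← ENNReal.toReal_ofReal hc, ← ENNReal.toReal_mul]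
  exact ENNReal.toReal_mono (ENNReal.mul_ne_top ENNReal.ofReal_ne_top hgi.lintegral_lt_top.ne) h

theorem DegWeight.inv_le {x₀ ℓ μ : ℝ} {α α' : ℝ → ℝ} (h : DegWeight x₀ ℓ μ α α') {t : ℝ}
    (ht : t ∈ Ioc x₀ ℓ) : (α t)⁻¹ ≤ (ℓ - x₀) ^ μ / α ℓ * (t - x₀) ^ (-μ) := by
  obtain ⟨hpos, -, -, hderiv, -, hlub, -⟩ := h
  have hbound : ∀ x ∈ Ioc x₀ ℓ, (x - x₀) * α' x ≤ μ * α x := fun x hx => by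
    have hle := hlub.1 ⟨x, hx, rfl⟩
    rw [div_le_iff₀ (hpos x hx)] at hle
    nlinarith [le_abs_self (α' x), sub_pos.2 hx.1]
  exact inv_le_of_antitoneOn_mul_rpow_neg (antitoneOn_mul_rpow_neg_sub hderiv hbound) hpos ht

theorem MemV1.integrable_mul_sq {x₀ ℓ : ℝ} {α u u' : ℝ → ℝ} (hu : MemV1 x₀ ℓ α u u')
    (hα : ∀ x ∈ Ioo x₀ ℓ, 0 ≤ α x) :
    Integrable (fun x => α x * u' x ^ 2) (volume.restrict (Ioo x₀ ℓ)) := by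
  refine hu.2.2.integrable_sq.congr ((ae_restrict_iff' measurableSet_Ioo).2 (ae_of_all _ ?_))
  intro x hx
  simp only [mul_pow, Real.sq_sqrt (hα x hx)]

theorem MemV1.ofReal_sq_le {x₀ ℓ : ℝ} {α u u' : ℝ → ℝ} (hu : MemV1 x₀ ℓ α u u') (huℓ : u ℓ = 0)
    (hαm : AEMeasurable α (volume.restrict (Ioo x₀ ℓ))) (hpos : ∀ x ∈ Ioo x₀ ℓ, 0 < α x)
    {x : ℝ} (hx : x ∈ Ioo x₀ ℓ) :
    ENNReal.ofReal (u x ^ 2) ≤ (∫⁻ t in Ioo x ℓ, ENNReal.ofReal (α t)⁻¹) *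
      ∫⁻ t in Ioo x₀ ℓ, ENNReal.ofReal (α t * u' t ^ 2) := by
  obtain ⟨hint, hux⟩ := hu.2.1 x ℓ hx.1 hx.2.le le_rfl
  have hsub : Ioo x ℓ ⊆ Ioo x₀ ℓ := Ioo_subset_Ioo_left hx.1.le
  calc ENNReal.ofReal (u x ^ 2) = ‖∫ t in x..ℓ, u' t‖ₑ ^ 2 := by
        rw [← hux, huℓ, zero_sub, enorm_neg, Real.enorm_eq_ofReal_abs,
          ← ENNReal.ofReal_pow (abs_nonneg _), sq_abs]
    _ ≤ (∫⁻ t in Ioo x ℓ, ENNReal.ofReal (α t)⁻¹) *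
          ∫⁻ t in Ioo x ℓ, ENNReal.ofReal (α t * u' t ^ 2) :=
        enorm_intervalIntegral_sq_le hx.2.le hint
          (hαm.mono_measure (Measure.restrict_mono hsub le_rfl)) fun t ht => hpos t (hsub ht)
    _ ≤ _ := by gcongr

theorem DegWeight.lintegral_ofReal_sq_le {x₀ ℓ μ : ℝ} {α α' u u' : ℝ → ℝ} (hxl : x₀ < ℓ)
    (h : DegWeight x₀ ℓ μ α α') (hu : MemV1 x₀ ℓ α u u') (huℓ : u ℓ = 0) :
    ∫⁻ x in Ioo x₀ ℓ, ENNReal.ofReal (u x ^ 2) ≤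
      ENNReal.ofReal ((ℓ - x₀) ^ 2 / ((2 - μ) * α ℓ)) *
        ∫⁻ x in Ioo x₀ ℓ, ENNReal.ofReal (α x * u' x ^ 2) := by
  have hinv : ∀ t ∈ Ioo x₀ ℓ, (α t)⁻¹ ≤ (ℓ - x₀) ^ μ / α ℓ * (t - x₀) ^ (-μ) :=
    fun t ht => h.inv_le (Ioo_subset_Ioc_self ht)
  obtain ⟨hpos, -, hcont, -, -, -, -, hμ2⟩ := h
  have hαm : AEMeasurable α (volume.restrict (Ioo x₀ ℓ)) :=
    (hcont.mono Ioo_subset_Icc_self).aemeasurable measurableSet_Ioo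
  have hαu' := hu.integrable_mul_sq fun x hx => (hpos x (Ioo_subset_Ioc_self hx)).le
  calc ∫⁻ x in Ioo x₀ ℓ, ENNReal.ofReal (u x ^ 2)
      ≤ ∫⁻ x in Ioo x₀ ℓ, (∫⁻ t in Ioo x ℓ, ENNReal.ofReal (α t)⁻¹) *
          ∫⁻ t in Ioo x₀ ℓ, ENNReal.ofReal (α t * u' t ^ 2) :=
        setLIntegral_mono' measurableSet_Ioo fun x hx =>
          hu.ofReal_sq_le huℓ hαm (fun t ht => hpos t (Ioo_subset_Ioc_self ht)) hx
    _ = (∫⁻ t in Ioo x₀ ℓ, ENNReal.ofReal (α t)⁻¹ * ENNReal.ofReal (t - x₀)) *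
          ∫⁻ t in Ioo x₀ ℓ, ENNReal.ofReal (α t * u' t ^ 2) := by
        rw [lintegral_mul_const' _ _ hαu'.lintegral_lt_top.ne,
          lintegral_Ioo_lintegral_Ioo_eq_lintegral_mul_sub
            (g := fun t => ENNReal.ofReal (α t)⁻¹) hαm.inv.ennreal_ofReal]
    _ ≤ _ := by
        gcongr
        exact lintegral_inv_mul_sub_le hxl.le hμ2 (hpos ℓ ⟨hxl, le_rfl⟩).le hinv

/-- If `α` satisfies (I)-(III) with degeneracy parameter `μ`, then every
`u ∈ V¹_α(x₀, ℓ)` with `u(ℓ) = 0` satisfies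
`∫_{x₀}^{ℓ} |u(x)|² dx ≤ C_α · ∫_{x₀}^{ℓ} α(x)|u'(x)|² dx`, where
`C_α = max{(ℓ - x₀)²/((2 - μ)α(ℓ)), 4(ℓ - x₀)^μ/α(ℓ)}`. -/
theorem weighted_poincare_zero (x₀ ℓ μ : ℝ) (α α' : ℝ → ℝ) (hxl : x₀ < ℓ)
    (h : DegWeight x₀ ℓ μ α α') (u u' : ℝ → ℝ) (hu : MemV1 x₀ ℓ α u u')
    (huℓ : u ℓ = 0) :
    ∫ x in Ioo x₀ ℓ, (u x) ^ 2 ≤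
      max ((ℓ - x₀) ^ 2 / ((2 - μ) * α ℓ)) (4 * (ℓ - x₀) ^ μ / α ℓ) *
        ∫ x in Ioo x₀ ℓ, α x * (u' x) ^ 2 := by
  have hsq := h.lintegral_ofReal_sq_le hxl hu huℓ
  obtain ⟨hpos_Ioc, -, -, -, -, -, -, hμ2⟩ := h
  have hpos : ∀ x ∈ Ioo x₀ ℓ, 0 < α x := fun x hx => hpos_Ioc x (Ioo_subset_Ioc_self hx)
  have hαu'_nonneg : 0 ≤ᵐ[volume.restrict (Ioo x₀ ℓ)] fun x => α x * u' x ^ 2 :=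
    (ae_restrict_iff' measurableSet_Ioo).2 (ae_of_all _ fun x hx =>
      mul_nonneg (hpos x hx).le (sq_nonneg _))
  have hC : 0 ≤ (ℓ - x₀) ^ 2 / ((2 - μ) * α ℓ) :=
    div_nonneg (sq_nonneg _) (mul_pos (sub_pos.2 hμ2) (hpos_Ioc ℓ ⟨hxl, le_rfl⟩)).le
  calc ∫ x in Ioo x₀ ℓ, u x ^ 2
      ≤ (ℓ - x₀) ^ 2 / ((2 - μ) * α ℓ) * ∫ x in Ioo x₀ ℓ, α x * u' x ^ 2 :=
        integral_le_mul_integral_of_lintegral_le (ae_of_all _ fun x => sq_nonneg (u x))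
          hu.1.integrable_sq.1 hαu'_nonneg (hu.integrable_mul_sq fun x hx => (hpos x hx).le) hC
          hsq
    _ ≤ _ := by gcongr; exacts [integral_nonneg_of_ae hαu'_nonneg, le_max_left _ _]
end

section
/- Let α satisfy assumptions (I)–(III) with degeneracy parameter μ. Then for every u ∈ V¹_α(x₀,ℓ) one has lim_{x → x₀⁺} (x − x₀)·|u(x)|² = 0. -/
open MeasureTheory Set Filter Topology

/-!
From `(x - x₀) |α'(x)| ≤ μ α(x)` and `μ < 2`, the quotient `(x - x₀)² / α(x)` is nondecreasing on
`(x₀, ℓ]`, so `1 / α(t) ≤ K / (t - x₀)²` with `K = (ℓ - x₀)² / α(ℓ)`, and `∫ₓʸ 1/α ≤ K / (x - x₀)`.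
Writing `u(y) - u(x) = ∫ₓʸ √α u' · α^(-1/2)` and applying Cauchy–Schwarz then gives
`(x - x₀) (u(y) - u(x))² ≤ K ∫_{x₀}^y α u'²`, hence
`(x - x₀) u(x)² ≤ 2 (x - x₀) u(y)² + 2 K ∫_{x₀}^y α u'²` for `x₀ < x ≤ y ≤ ℓ`.
Letting first `x → x₀⁺` and then `y → x₀⁺` gives the limit `0`.
-/

theorem sq_integral_mul_le_integral_sq_mul_integral_sq {X : Type*} [MeasurableSpace X]
    {ν : Measure X} {f g : X → ℝ} (hf : MemLp f 2 ν) (hg : MemLp g 2 ν) :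
    (∫ a, f a * g a ∂ν) ^ 2 ≤ (∫ a, f a ^ 2 ∂ν) * ∫ a, g a ^ 2 ∂ν := by
  have hpq : Real.HolderConjugate 2 2 := .two_two
  have holder := integral_mul_norm_le_Lp_mul_Lq hpq (ENNReal.ofReal_ofNat 2 ▸ hf)
    (ENNReal.ofReal_ofNat 2 ▸ hg)
  simp only [Real.norm_eq_abs, Real.rpow_two, sq_abs, ← Real.sqrt_eq_rpow] at holder
  calc (∫ a, f a * g a ∂ν) ^ 2 ≤ (∫ a, |f a| * |g a| ∂ν) ^ 2 := by
        rw [← sq_abs]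
        gcongr
        simpa only [abs_mul] using abs_integral_le_integral_abs (f := fun a => f a * g a)
    _ ≤ (√(∫ a, f a ^ 2 ∂ν) * √(∫ a, g a ^ 2 ∂ν)) ^ 2 := by gcongr
    _ = (∫ a, f a ^ 2 ∂ν) * ∫ a, g a ^ 2 ∂ν := by
        rw [mul_pow, Real.sq_sqrt (integral_nonneg fun a => sq_nonneg _),
          Real.sq_sqrt (integral_nonneg fun a => sq_nonneg _)]

theorem sq_intervalIntegral_le_mul_integral_inv {w g : ℝ → ℝ} {x y : ℝ} (hxy : x ≤ y)
    (hw : ∀ t ∈ Icc x y, 0 < w t) (hwc : ContinuousOn w (Icc x y))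
    (hg : MemLp (fun t => √(w t) * g t) 2 (volume.restrict (Ioc x y))) :
    (∫ t in x..y, g t) ^ 2 ≤ (∫ t in Ioc x y, (√(w t) * g t) ^ 2) * ∫ t in x..y, (w t)⁻¹ := by
  have hinv : ContinuousOn (fun t => (√(w t))⁻¹) (Icc x y) :=
    (hwc.sqrt).inv₀ fun t ht => (Real.sqrt_pos.2 (hw t ht)).ne'
  have hinv_memLp : MemLp (fun t => (√(w t))⁻¹) 2 (volume.restrict (Ioc x y)) := by
    refine (memLp_two_iff_integrable_sq
      ((hinv.mono Ioc_subset_Icc_self).aestronglyMeasurable measurableSet_Ioc)).2 ?_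
    exact ((hinv.pow 2).integrableOn_Icc).mono_set Ioc_subset_Icc_self
  have hsplit : ∫ t in x..y, g t = ∫ t in Ioc x y, √(w t) * g t * (√(w t))⁻¹ := by
    rw [intervalIntegral.integral_of_le hxy]
    refine setIntegral_congr_fun measurableSet_Ioc fun t ht => ?_
    have := Real.sqrt_pos.2 (hw t (Ioc_subset_Icc_self ht))
    field_simp
  have hweight : ∫ t in x..y, (w t)⁻¹ = ∫ t in Ioc x y, ((√(w t))⁻¹) ^ 2 := by
    rw [intervalIntegral.integral_of_le hxy]
    refine setIntegral_congr_fun measurableSet_Ioc fun t ht => ?_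
    rw [inv_pow, Real.sq_sqrt (hw t (Ioc_subset_Icc_self ht)).le]
  rw [hsplit, hweight]
  exact sq_integral_mul_le_integral_sq_mul_integral_sq hg hinv_memLp

theorem tendsto_zero_of_eventually_le_add {X Y : Type*} {l : Filter X} {l' : Filter Y} [l'.NeBot]
    {F : X → ℝ} {G : X → Y → ℝ} {H : Y → ℝ} (hF : ∀ᶠ x in l, 0 ≤ F x)
    (hG : ∀ y, Tendsto (G · y) l (𝓝 0)) (hH : Tendsto H l' (𝓝 0))
    (hle : ∀ᶠ y in l', ∀ᶠ x in l, F x ≤ G x y + H y) : Tendsto F l (𝓝 0) := by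
  refine tendsto_order.2 ⟨fun ε hε => hF.mono fun x hx => hε.trans_le hx, fun ε hε => ?_⟩
  obtain ⟨y, hHy, hley⟩ := ((hH.eventually (gt_mem_nhds (half_pos hε))).and hle).exists
  filter_upwards [hley, (hG y).eventually (gt_mem_nhds (half_pos hε))] with x hx hGx
  linarith

theorem monotoneOn_sq_sub_div_of_sub_mul_deriv_le {a b : ℝ} {w w' : ℝ → ℝ}
    (hpos : ∀ x ∈ Ioc a b, 0 < w x)
    (hderiv : ∀ x ∈ Ioc a b, HasDerivWithinAt w (w' x) (Ioc a b) x)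
    (hle : ∀ x ∈ Ioc a b, (x - a) * w' x ≤ 2 * w x) :
    MonotoneOn (fun x => (x - a) ^ 2 / w x) (Ioc a b) := by
  have hquot : ∀ x ∈ Ioc a b, HasDerivWithinAt (fun x => (x - a) ^ 2 / w x)
      ((2 * (x - a) * w x - (x - a) ^ 2 * w' x) / w x ^ 2) (Ioc a b) x := fun x hx => by
    simpa using (((hasDerivWithinAt_id x _).sub_const a).fun_pow 2).fun_div (hderiv x hx)
      (hpos x hx).ne'
  refine monotoneOn_of_hasDerivWithinAt_nonneg (convex_Ioc a b)
    (fun x hx => (hquot x hx).continuousWithinAt)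
    (fun x hx => (hquot x (interior_subset hx)).mono_of_mem_nhdsWithin ?_)
    (fun x hx => ?_)
  · exact mem_nhdsWithin_of_mem_nhds (mem_interior_iff_mem_nhds.1 hx)
  · have hx' := interior_subset hx
    have hxa : 0 ≤ x - a := sub_nonneg.2 hx'.1.le
    have hnum : 0 ≤ (x - a) * (2 * w x - (x - a) * w' x) :=
      mul_nonneg hxa (sub_nonneg.2 (hle x hx'))
    exact div_nonneg (by linarith) (sq_nonneg _)

theorem sq_sub_le_mul_of_sub_mul_deriv_le {a b : ℝ} {w w' : ℝ → ℝ} (hab : a < b)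
    (hpos : ∀ x ∈ Ioc a b, 0 < w x)
    (hderiv : ∀ x ∈ Ioc a b, HasDerivWithinAt w (w' x) (Ioc a b) x)
    (hle : ∀ x ∈ Ioc a b, (x - a) * w' x ≤ 2 * w x) :
    ∀ x ∈ Ioc a b, (x - a) ^ 2 ≤ (b - a) ^ 2 / w b * w x := fun x hx => by
  have hb : b ∈ Ioc a b := ⟨hab, le_rfl⟩
  have := monotoneOn_sq_sub_div_of_sub_mul_deriv_le hpos hderiv hle hx hb hx.2
  rwa [div_le_iff₀ (hpos x hx)] at this

theorem DegWeight.sq_sub_le_mul {x₀ ℓ μ : ℝ} {α α' : ℝ → ℝ} (h : DegWeight x₀ ℓ μ α α')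
    (hxl : x₀ < ℓ) : ∀ x ∈ Ioc x₀ ℓ, (x - x₀) ^ 2 ≤ (ℓ - x₀) ^ 2 / α ℓ * α x := by
  obtain ⟨hpos, -, -, hderiv, -, hlub, -, hμ⟩ := h
  refine sq_sub_le_mul_of_sub_mul_deriv_le hxl hpos hderiv fun x hx => ?_
  have hratio := hlub.1 (mem_image_of_mem _ hx)
  rw [div_le_iff₀ (hpos x hx)] at hratio
  calc (x - x₀) * α' x ≤ (x - x₀) * |α' x| :=
        mul_le_mul_of_nonneg_left (le_abs_self _) (sub_nonneg.2 hx.1.le)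
    _ ≤ 2 * α x := by nlinarith [hpos x hx]

theorem nonneg_of_sq_sub_le_mul {a t K w : ℝ} (hat : a < t) (hw : 0 < w)
    (h : (t - a) ^ 2 ≤ K * w) : 0 ≤ K :=
  (pos_of_mul_pos_left ((pow_pos (sub_pos.2 hat) 2).trans_le h) hw.le).le

theorem intervalIntegral_inv_le_of_sq_sub_le_mul {w : ℝ → ℝ} {a x y K : ℝ} (hax : a < x)
    (hxy : x ≤ y) (hw : ∀ t ∈ Icc x y, 0 < w t) (hwc : ContinuousOn w (Icc x y))
    (hK : ∀ t ∈ Icc x y, (t - a) ^ 2 ≤ K * w t) :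
    ∫ t in x..y, (w t)⁻¹ ≤ K / (x - a) := by
  have hsub : ∀ t ∈ Icc x y, 0 < t - a := fun t ht => sub_pos.2 (hax.trans_le ht.1)
  have hx : x ∈ Icc x y := ⟨le_rfl, hxy⟩
  have hK0 : 0 ≤ K := nonneg_of_sq_sub_le_mul hax (hw x hx) (hK x hx)
  have hprim : ∀ t ∈ uIcc x y, HasDerivAt (fun s => -K / (s - a)) (K / (t - a) ^ 2) t := by
    intro t ht
    rw [uIcc_of_le hxy] at ht
    simpa [neg_div, div_eq_mul_inv] using
      ((hasDerivAt_id t).sub_const a).inv (hsub t ht).ne' |>.const_mul (-K)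
  have hcmp_cont : ContinuousOn (fun t => K / (t - a) ^ 2) (Icc x y) :=
    continuousOn_const.div (by fun_prop) fun t ht => (pow_pos (hsub t ht) 2).ne'
  calc ∫ t in x..y, (w t)⁻¹ ≤ ∫ t in x..y, K / (t - a) ^ 2 := by
        refine intervalIntegral.integral_mono_on hxy ?_ ?_ fun t ht => ?_
        · exact (hwc.inv₀ fun t ht => (hw t ht).ne').intervalIntegrable_of_Icc hxy
        · exact hcmp_cont.intervalIntegrable_of_Icc hxy
        · rw [inv_eq_one_div, div_le_div_iff₀ (hw t ht) (pow_pos (hsub t ht) 2)]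
          linarith [hK t ht]
    _ = K / (x - a) - K / (y - a) := by
        rw [intervalIntegral.integral_eq_sub_of_hasDerivAt hprim
          (hcmp_cont.intervalIntegrable_of_Icc hxy)]
        ring
    _ ≤ K / (x - a) := sub_le_self _ (div_nonneg hK0 (hsub y ⟨hxy, le_rfl⟩).le)

theorem tendsto_setIntegral_Ioc_nhdsGT {f : ℝ → ℝ} {a b : ℝ} (hab : a < b)
    (hf : IntegrableOn f (Ioc a b)) :
    Tendsto (fun y => ∫ t in Ioc a y, f t) (𝓝[>] a) (𝓝 0) := by
  have hcont := intervalIntegral.continuousOn_primitive (μ := volume)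
    ((integrableOn_Icc_iff_integrableOn_Ioc).2 hf) a ⟨le_rfl, hab.le⟩
  rw [← nhdsWithin_Ioc_eq_nhdsGT hab]
  simpa [ContinuousWithinAt] using hcont.mono Ioc_subset_Icc_self

namespace MemV1

variable {x₀ ℓ K x y : ℝ} {α u u' : ℝ → ℝ}

theorem integrableOn_sq (hu : MemV1 x₀ ℓ α u u') :
    IntegrableOn (fun t => (√(α t) * u' t) ^ 2) (Ioc x₀ ℓ) :=
  IntegrableOn.congr_set_ae hu.2.2.integrable_sq Ioo_ae_eq_Ioc.symm

theorem sub_mul_sq_sub_le (hu : MemV1 x₀ ℓ α u u') (hpos : ∀ t ∈ Ioc x₀ ℓ, 0 < α t)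
    (hαc : ContinuousOn α (Icc x₀ ℓ)) (hK : ∀ t ∈ Ioc x₀ ℓ, (t - x₀) ^ 2 ≤ K * α t)
    (hx : x₀ < x) (hxy : x ≤ y) (hy : y ≤ ℓ) :
    (x - x₀) * (u y - u x) ^ 2 ≤ K * ∫ t in Ioc x y, (√(α t) * u' t) ^ 2 := by
  have hIcc : Icc x y ⊆ Ioc x₀ ℓ := fun t ht => ⟨hx.trans_le ht.1, ht.2.trans hy⟩
  have hmemLp : MemLp (fun t => √(α t) * u' t) 2 (volume.restrict (Ioc x y)) :=
    hu.2.2.mono_measure <| Measure.restrict_mono_ae <|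
      (Ioc_subset_Ioc hx.le hy).eventuallyLE.trans Ioo_ae_eq_Ioc.symm.le
  have hx₀ : 0 < x - x₀ := sub_pos.2 hx
  rw [(hu.2.1 x y hx hxy hy).2]
  calc (x - x₀) * (∫ t in x..y, u' t) ^ 2
      ≤ (x - x₀) * ((∫ t in Ioc x y, (√(α t) * u' t) ^ 2) * ∫ t in x..y, (α t)⁻¹) := by
        gcongr
        exact sq_intervalIntegral_le_mul_integral_inv hxy (fun t ht => hpos t (hIcc ht))
          (hαc.mono (hIcc.trans Ioc_subset_Icc_self)) hmemLp
    _ ≤ (x - x₀) * ((∫ t in Ioc x y, (√(α t) * u' t) ^ 2) * (K / (x - x₀))) := by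
        gcongr
        exact intervalIntegral_inv_le_of_sq_sub_le_mul hx hxy (fun t ht => hpos t (hIcc ht))
          (hαc.mono (hIcc.trans Ioc_subset_Icc_self)) fun t ht => hK t (hIcc ht)
    _ = K * ∫ t in Ioc x y, (√(α t) * u' t) ^ 2 := by
        field_simp

theorem sub_mul_sq_le (hu : MemV1 x₀ ℓ α u u') (hpos : ∀ t ∈ Ioc x₀ ℓ, 0 < α t)
    (hαc : ContinuousOn α (Icc x₀ ℓ)) (hK : ∀ t ∈ Ioc x₀ ℓ, (t - x₀) ^ 2 ≤ K * α t)
    (hx : x₀ < x) (hxy : x ≤ y) (hy : y ≤ ℓ) :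
    (x - x₀) * u x ^ 2 ≤
      2 * ((x - x₀) * u y ^ 2) + 2 * (K * ∫ t in Ioc x₀ y, (√(α t) * u' t) ^ 2) := by
  have hx' : x ∈ Ioc x₀ ℓ := ⟨hx, hxy.trans hy⟩
  have hK0 : 0 ≤ K := nonneg_of_sq_sub_le_mul hx (hpos x hx') (hK x hx')
  have htail : ∫ t in Ioc x y, (√(α t) * u' t) ^ 2 ≤ ∫ t in Ioc x₀ y, (√(α t) * u' t) ^ 2 :=
    setIntegral_mono_set (hu.integrableOn_sq.mono_set (Ioc_subset_Ioc_right hy))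
      (Eventually.of_forall fun t => sq_nonneg _) (Ioc_subset_Ioc_left hx.le).eventuallyLE
  have hsq : u x ^ 2 ≤ 2 * u y ^ 2 + 2 * (u y - u x) ^ 2 := by
    nlinarith [sq_nonneg (u y + (u y - u x))]
  calc (x - x₀) * u x ^ 2 ≤ 2 * ((x - x₀) * u y ^ 2) + 2 * ((x - x₀) * (u y - u x) ^ 2) := by
        nlinarith [mul_le_mul_of_nonneg_left hsq (sub_pos.2 hx).le]
    _ ≤ _ := by
        gcongr 2 * ((x - x₀) * u y ^ 2) + 2 * ?_
        exact (hu.sub_mul_sq_sub_le hpos hαc hK hx hxy hy).trans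
          (mul_le_mul_of_nonneg_left htail hK0)

end MemV1

/-- If `α` satisfies (I)-(III) with degeneracy parameter `μ`, then every
`u ∈ V¹_α(x₀, ℓ)` satisfies `lim_{x → x₀⁺} (x - x₀)·|u(x)|² = 0`. -/
theorem limit_xu_sq (x₀ ℓ μ : ℝ) (α α' : ℝ → ℝ) (hxl : x₀ < ℓ)
    (h : DegWeight x₀ ℓ μ α α') (u u' : ℝ → ℝ) (hu : MemV1 x₀ ℓ α u u') :
    Tendsto (fun x => (x - x₀) * (u x) ^ 2) (𝓝[>] x₀) (𝓝 0) := by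
  have hK := h.sq_sub_le_mul hxl
  obtain ⟨hpos, -, hαc, -⟩ := h
  set K := (ℓ - x₀) ^ 2 / α ℓ
  refine tendsto_zero_of_eventually_le_add (l' := 𝓝[>] x₀)
    (G := fun x y => 2 * ((x - x₀) * u y ^ 2))
    (H := fun y => 2 * (K * ∫ t in Ioc x₀ y, (√(α t) * u' t) ^ 2)) ?_ (fun y => ?_) ?_ ?_
  · filter_upwards [self_mem_nhdsWithin] with x (hx : x₀ < x)
    exact mul_nonneg (sub_nonneg.2 hx.le) (sq_nonneg _)
  · exact tendsto_nhdsWithin_of_tendsto_nhds (Continuous.tendsto' (by fun_prop) _ _ (by simp))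
  · simpa using ((tendsto_setIntegral_Ioc_nhdsGT hxl hu.integrableOn_sq).const_mul K).const_mul 2
  · filter_upwards [Ioc_mem_nhdsGT hxl] with y hy
    filter_upwards [Ioc_mem_nhdsGT hy.1] with x hx
    exact hu.sub_mul_sq_le hpos hαc hK hx.1 hx.2 hy.2
end

section
/- Let α satisfy assumptions (I)–(III) with degeneracy parameter μ. Then for every u ∈ V²_α(x₀,ℓ) one has lim_{x → x₀⁺} (x − x₀)·α(x)·|u'(x)|² = 0. -/
open MeasureTheory Set Filter Topology

/-- `u ∈ V²_α(x₀, ℓ)` (real-valued): `u ∈ V¹_α(x₀, ℓ)` and `α·u' ∈ H¹(x₀, ℓ)`, i.e.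
`α·u' ∈ L²`, it is absolutely continuous with a.e. derivative `g' = (α u')' ∈ L²`. -/
def MemV2 (x₀ ℓ : ℝ) (α u u' g' : ℝ → ℝ) : Prop :=
  MemV1 x₀ ℓ α u u' ∧
  MemLp (fun x => α x * u' x) 2 (volume.restrict (Ioo x₀ ℓ)) ∧
  MemLp g' 2 (volume.restrict (Ioo x₀ ℓ)) ∧
  ∀ x y : ℝ, x₀ < x → x ≤ y → y ≤ ℓ →
    IntervalIntegrable g' volume x y ∧ α y * u' y - α x * u' x = ∫ t in x..y, g' t

/-!
Write `g = α u'`, so that `(x - x₀) α u'² = (x - x₀) g² / α` and, `g` being in `H¹`,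
`g(x) = L + ∫_{x₀}^x g'`. The bound `(t - x₀)|α'| ≤ μ α` makes `α(x) (x - x₀)^(-μ)` nonincreasing.

If `L = 0`, Cauchy–Schwarz gives `g(x)² ≤ (x - x₀) ∫_{x₀}^x g'²`, and monotonicity together with
`μ < 2` gives `(x - x₀)² ≤ C α(x)`; the product is at most `C ∫_{x₀}^x g'² → 0`.

If `L ≠ 0`, then `1/α ≤ (4/L²) α u'²` near `x₀`, so `1/α` is integrable there. Monotonicity gives
`α ≤ 2^μ α(x)` on `[x, 2x - x₀]`, hence `(x - x₀)/α(x) ≤ 2^μ ∫_x^{2x-x₀} 1/α → 0`, while `g² → L²`.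
-/

theorem antitoneOn_mul_rpow_neg {c ν : ℝ} {f f' : ℝ → ℝ} {s : Set ℝ} (hs : Convex ℝ s)
    (hsc : ∀ t ∈ s, c < t) (hf : ContinuousOn f s) (hf' : ∀ t ∈ interior s, HasDerivAt f (f' t) t)
    (hle : ∀ t ∈ interior s, (t - c) * f' t ≤ ν * f t) :
    AntitoneOn (fun t => f t * (t - c) ^ (-ν)) s := by
  have hderiv : ∀ t ∈ interior s, HasDerivAt (fun t => f t * (t - c) ^ (-ν))
      ((t - c) ^ (-ν - 1) * ((t - c) * f' t - ν * f t)) t := by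
    intro t ht
    have htc : 0 < t - c := sub_pos.2 (hsc t (interior_subset ht))
    refine ((hf' t ht).mul (((hasDerivAt_id t).sub_const c).rpow_const (p := -ν)
      (Or.inl htc.ne'))).congr_deriv ?_
    simp only [id]
    rw [show -ν = (-ν - 1) + 1 by ring, Real.rpow_add_one htc.ne', add_sub_cancel_right]
    ring
  refine antitoneOn_of_deriv_nonpos hs ?_
    (fun t ht => (hderiv t ht).differentiableAt.differentiableWithinAt) ?_
  · exact hf.mul <| (continuousOn_id.sub continuousOn_const).rpow_const
      fun t ht => Or.inl (sub_pos.2 (hsc t ht)).ne'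
  · intro t ht
    rw [(hderiv t ht).deriv]
    exact mul_nonpos_of_nonneg_of_nonpos
      (Real.rpow_nonneg (sub_pos.2 (hsc t (interior_subset ht))).le _) (sub_nonpos.2 (hle t ht))

theorem sq_intervalIntegral_le {a b : ℝ} (hab : a ≤ b) {f : ℝ → ℝ}
    (hf : IntervalIntegrable f volume a b)
    (hf2 : IntervalIntegrable (fun t => f t ^ 2) volume a b) :
    (∫ t in a..b, f t) ^ 2 ≤ (b - a) * ∫ t in a..b, f t ^ 2 := by
  rcases hab.eq_or_lt with rfl | hab
  · simp
  obtain ⟨c, hc⟩ : ∃ c, ∫ t in a..b, f t = c * (b - a) :=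
    ⟨_, (div_mul_cancel₀ _ (sub_pos.2 hab).ne').symm⟩
  -- AM-GM `2 c f ≤ f ^ 2 + c ^ 2`, integrated and evaluated at the optimal `c`
  have hamgm : ∫ t in a..b, 2 * c * f t ≤ ∫ t in a..b, (f t ^ 2 + c ^ 2) :=
    intervalIntegral.integral_mono_on hab.le (hf.const_mul _) (hf2.add intervalIntegrable_const)
      fun t _ => by nlinarith [sq_nonneg (f t - c)]
  rw [intervalIntegral.integral_const_mul,
    intervalIntegral.integral_add hf2 intervalIntegrable_const, intervalIntegral.integral_const,
    smul_eq_mul] at hamgm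
  rw [hc] at hamgm ⊢
  nlinarith [sub_pos.2 hab]

theorem tendsto_intervalIntegral_nhdsGT {a b : ℝ} (hab : a < b) {f : ℝ → ℝ}
    (hf : IntervalIntegrable f volume a b) :
    Tendsto (fun x => ∫ t in a..x, f t) (𝓝[>] a) (𝓝 0) := by
  have hcont := intervalIntegral.continuousOn_primitive_interval' hf left_mem_uIcc a left_mem_uIcc
  rw [uIcc_of_le hab.le, ContinuousWithinAt, intervalIntegral.integral_same] at hcont
  exact hcont.mono_left <| nhdsWithin_le_of_mem <|
    mem_of_superset (Ioo_mem_nhdsGT hab) Ioo_subset_Icc_self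

theorem integrableAtFilter_inv_of_tendsto {X : Type*} [MeasurableSpace X] {μ : Measure X}
    {l : Filter X} [IsMeasurablyGenerated l] {f g : X → ℝ} {L : ℝ} (hg : Tendsto g l (𝓝 L))
    (hL : L ≠ 0) (hfm : StronglyMeasurableAtFilter (fun x => (f x)⁻¹) l μ)
    (hint : IntegrableAtFilter (fun x => g x ^ 2 / f x) l μ) :
    IntegrableAtFilter (fun x => (f x)⁻¹) l μ := by
  have hbig : (fun x => g x ^ 2 / f x * (g x ^ 2)⁻¹) =O[l] fun x => g x ^ 2 / f x * 1 :=
    (Asymptotics.isBigO_refl _ _).mul (((hg.pow 2).inv₀ (pow_ne_zero 2 hL)).isBigO_one ℝ)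
  refine Asymptotics.IsBigO.integrableAtFilter ?_ hfm hint
  refine (hbig.congr' ?_ (by simp)).trans (Asymptotics.isBigO_refl _ _)
  filter_upwards [hg.eventually_ne hL] with x hx
  field_simp

namespace DegWeight

variable {x₀ ℓ μ : ℝ} {α α' : ℝ → ℝ}

theorem hasDerivAt (h : DegWeight x₀ ℓ μ α α') {t : ℝ} (ht : t ∈ Ioo x₀ ℓ) :
    HasDerivAt α (α' t) t :=
  (h.2.2.2.1 t (Ioo_subset_Ioc_self ht)).hasDerivAt
    (mem_of_superset (Ioo_mem_nhds ht.1 ht.2) Ioo_subset_Ioc_self)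

theorem mul_abs_deriv_le (h : DegWeight x₀ ℓ μ α α') {t : ℝ} (ht : t ∈ Ioc x₀ ℓ) :
    (t - x₀) * |α' t| ≤ μ * α t :=
  (div_le_iff₀ (h.1 t ht)).1 (h.2.2.2.2.2.1.1 ⟨t, ht, rfl⟩)

theorem nonneg (h : DegWeight x₀ ℓ μ α α') (hxl : x₀ < ℓ) : 0 ≤ μ :=
  nonneg_of_mul_nonneg_left
    ((mul_nonneg (sub_pos.2 hxl).le (abs_nonneg _)).trans (h.mul_abs_deriv_le ⟨hxl, le_rfl⟩))
    (h.1 ℓ ⟨hxl, le_rfl⟩)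

theorem antitoneOn (h : DegWeight x₀ ℓ μ α α') :
    AntitoneOn (fun x => α x * (x - x₀) ^ (-μ)) (Ioc x₀ ℓ) := by
  refine antitoneOn_mul_rpow_neg (convex_Ioc _ _) (fun t ht => ht.1)
    (h.2.2.1.mono Ioc_subset_Icc_self) (fun t ht => h.hasDerivAt ?_) fun t ht => ?_
  · rwa [interior_Ioc] at ht
  · rw [interior_Ioc] at ht
    exact (mul_le_mul_of_nonneg_left (le_abs_self _) (sub_pos.2 ht.1).le).trans
      (h.mul_abs_deriv_le (Ioo_subset_Ioc_self ht))

theorem le_mul_div_rpow (h : DegWeight x₀ ℓ μ α α') {x s : ℝ} (hx : x₀ < x) (hxs : x ≤ s)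
    (hs : s ≤ ℓ) : α s ≤ α x * ((s - x₀) / (x - x₀)) ^ μ := by
  have hx' : 0 < x - x₀ := sub_pos.2 hx
  have hs' : 0 < s - x₀ := hx'.trans_le (sub_le_sub_right hxs _)
  have hanti := h.antitoneOn ⟨hx, hxs.trans hs⟩ ⟨hx.trans_le hxs, hs⟩ hxs
  simp only [Real.rpow_neg hs'.le, Real.rpow_neg hx'.le, ← div_eq_mul_inv] at hanti
  rw [div_le_div_iff₀ (Real.rpow_pos_of_pos hs' _) (Real.rpow_pos_of_pos hx' _)] at hanti
  rw [Real.div_rpow hs'.le hx'.le, ← mul_div_assoc, le_div_iff₀ (Real.rpow_pos_of_pos hx' _)]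
  linarith

theorem mul_sq_sub_le (h : DegWeight x₀ ℓ μ α α') {x : ℝ} (hx : x ∈ Ioc x₀ ℓ) :
    α ℓ * (x - x₀) ^ 2 ≤ (ℓ - x₀) ^ 2 * α x := by
  have hx' : 0 < x - x₀ := sub_pos.2 hx.1
  have hr : 1 ≤ (ℓ - x₀) / (x - x₀) := (one_le_div hx').2 (sub_le_sub_right hx.2 _)
  have hrpow : ((ℓ - x₀) / (x - x₀)) ^ μ ≤ ((ℓ - x₀) / (x - x₀)) ^ 2 := by
    rw [← Real.rpow_two]
    have hμ2 : μ < 2 := h.2.2.2.2.2.2.2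
    exact Real.rpow_le_rpow_of_exponent_le hr hμ2.le
  have := (h.le_mul_div_rpow hx.1 hx.2 le_rfl).trans
    (mul_le_mul_of_nonneg_left hrpow (h.1 x hx).le)
  rw [div_pow, ← mul_div_assoc, le_div_iff₀ (pow_pos hx' 2)] at this
  linarith

theorem le_two_rpow_mul (h : DegWeight x₀ ℓ μ α α') {x s : ℝ} (hx : x₀ < x) (hxs : x ≤ s)
    (hs2 : s - x₀ ≤ 2 * (x - x₀)) (hs : s ≤ ℓ) : α s ≤ 2 ^ μ * α x := by
  have hx' : 0 < x - x₀ := sub_pos.2 hx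
  have hr : (s - x₀) / (x - x₀) ≤ 2 := (div_le_iff₀ hx').2 hs2
  calc α s ≤ α x * ((s - x₀) / (x - x₀)) ^ μ := h.le_mul_div_rpow hx hxs hs
    _ ≤ α x * 2 ^ μ := by
      gcongr
      · exact (h.1 x ⟨hx, hxs.trans hs⟩).le
      · exact div_nonneg (by linarith) hx'.le
      · exact h.nonneg (hx.trans_le (hxs.trans hs))
    _ = 2 ^ μ * α x := mul_comm _ _

theorem tendsto_sub_div_mul_sq_intervalIntegral (h : DegWeight x₀ ℓ μ α α') (hxl : x₀ < ℓ)
    {f : ℝ → ℝ} (hf : IntervalIntegrable f volume x₀ ℓ)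
    (hf2 : IntervalIntegrable (fun t => f t ^ 2) volume x₀ ℓ) :
    Tendsto (fun x => (x - x₀) / α x * (∫ t in x₀..x, f t) ^ 2) (𝓝[>] x₀) (𝓝 0) := by
  have hE := (tendsto_intervalIntegral_nhdsGT hxl hf2).const_mul ((ℓ - x₀) ^ 2 / α ℓ)
  rw [mul_zero] at hE
  refine tendsto_of_tendsto_of_tendsto_of_le_of_le' tendsto_const_nhds hE ?_ ?_ <;>
    filter_upwards [Ioc_mem_nhdsGT hxl] with x hx
  · exact mul_nonneg (div_nonneg (sub_pos.2 hx.1).le (h.1 x hx).le) (sq_nonneg _)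
  have hsub : uIcc x₀ x ⊆ uIcc x₀ ℓ := uIcc_subset_uIcc_left (mem_uIcc_of_le hx.1.le hx.2)
  have hE0 : 0 ≤ ∫ t in x₀..x, f t ^ 2 :=
    intervalIntegral.integral_nonneg hx.1.le fun t _ => sq_nonneg _
  have hK : (x - x₀) ^ 2 / α x ≤ (ℓ - x₀) ^ 2 / α ℓ := by
    rw [div_le_div_iff₀ (h.1 x hx) (h.1 ℓ ⟨hxl, le_rfl⟩)]
    linarith [h.mul_sq_sub_le hx]
  calc (x - x₀) / α x * (∫ t in x₀..x, f t) ^ 2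
      ≤ (x - x₀) / α x * ((x - x₀) * ∫ t in x₀..x, f t ^ 2) := by
        gcongr
        · exact div_nonneg (sub_pos.2 hx.1).le (h.1 x hx).le
        · exact sq_intervalIntegral_le hx.1.le (hf.mono_set hsub) (hf2.mono_set hsub)
    _ = (x - x₀) ^ 2 / α x * ∫ t in x₀..x, f t ^ 2 := by ring
    _ ≤ (ℓ - x₀) ^ 2 / α ℓ * ∫ t in x₀..x, f t ^ 2 := by gcongr

theorem sub_div_le_integral_inv (h : DegWeight x₀ ℓ μ α α') {x : ℝ} (hx : x₀ < x)
    (hxℓ : 2 * x - x₀ ≤ ℓ) : (x - x₀) / α x ≤ 2 ^ μ * ∫ t in x..(2 * x - x₀), (α t)⁻¹ := by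
  have hmem : ∀ t ∈ Icc x (2 * x - x₀), t ∈ Ioc x₀ ℓ :=
    fun t ht => ⟨hx.trans_le ht.1, ht.2.trans hxℓ⟩
  have hαx : 0 < α x := h.1 x (hmem x ⟨le_rfl, by linarith⟩)
  have hint : IntervalIntegrable (fun t => (α t)⁻¹) volume x (2 * x - x₀) :=
    ((h.2.2.1.mono fun t ht => Ioc_subset_Icc_self (hmem t ht)).inv₀
      fun t ht => (h.1 t (hmem t ht)).ne').intervalIntegrable_of_Icc (by linarith)
  calc (x - x₀) / α x = 2 ^ μ * ∫ _ in x..(2 * x - x₀), (2 ^ μ * α x)⁻¹ := by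
        rw [intervalIntegral.integral_const, smul_eq_mul]
        field_simp
        ring
    _ ≤ 2 ^ μ * ∫ t in x..(2 * x - x₀), (α t)⁻¹ := by
        gcongr
        exact intervalIntegral.integral_mono_on (by linarith) intervalIntegrable_const hint
          fun t ht => inv_anti₀ (h.1 t (hmem t ht))
            (h.le_two_rpow_mul hx ht.1 (by linarith [ht.2]) (hmem t ht).2)

theorem tendsto_sub_div (h : DegWeight x₀ ℓ μ α α') (hxl : x₀ < ℓ)
    (hinv : IntegrableAtFilter (fun t => (α t)⁻¹) (𝓝[>] x₀)) :
    Tendsto (fun x => (x - x₀) / α x) (𝓝[>] x₀) (𝓝 0) := by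
  obtain ⟨s, hs, hint⟩ := hinv
  obtain ⟨δ, hδ : x₀ < δ, hδs⟩ := mem_nhdsGT_iff_exists_Ioo_subset.1 hs
  have hP : IntervalIntegrable (fun t => (α t)⁻¹) volume x₀ δ :=
    (intervalIntegrable_iff_integrableOn_Ioo_of_le hδ.le).2 (hint.mono_set hδs)
  have hP0 := tendsto_intervalIntegral_nhdsGT hδ hP
  have hdouble : Tendsto (fun x => 2 * x - x₀) (𝓝[>] x₀) (𝓝[>] x₀) := by
    refine tendsto_nhdsWithin_of_tendsto_nhds_of_eventually_within _ ?_ ?_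
    · exact ((by fun_prop : Continuous fun x : ℝ => 2 * x - x₀).tendsto' x₀ x₀ (by ring)).mono_left
        nhdsWithin_le_nhds
    · filter_upwards [self_mem_nhdsWithin] with x (hx : x₀ < x)
      show x₀ < 2 * x - x₀
      linarith
  have hlim : Tendsto (fun x => 2 ^ μ * ((∫ t in x₀..(2 * x - x₀), (α t)⁻¹) -
      ∫ t in x₀..x, (α t)⁻¹)) (𝓝[>] x₀) (𝓝 0) := by
    simpa using ((hP0.comp hdouble).sub hP0).const_mul (2 ^ μ)
  have hnear : Ioo x₀ ((x₀ + min δ ℓ) / 2) ∈ 𝓝[>] x₀ :=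
    Ioo_mem_nhdsGT (by linarith [lt_min hδ hxl])
  refine tendsto_of_tendsto_of_tendsto_of_le_of_le' tendsto_const_nhds hlim ?_ ?_
  · filter_upwards [Ioc_mem_nhdsGT hxl] with x hx
    exact div_nonneg (sub_pos.2 hx.1).le (h.1 x hx).le
  filter_upwards [hnear] with x hx
  have hxδ : 2 * x - x₀ ≤ δ := by linarith [hx.2, min_le_left δ ℓ]
  have hxℓ : 2 * x - x₀ ≤ ℓ := by linarith [hx.2, min_le_right δ ℓ]
  have hx_mem : x ∈ uIcc x₀ δ := mem_uIcc_of_le hx.1.le (by linarith [hx.1])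
  have h2x_mem : 2 * x - x₀ ∈ uIcc x₀ δ := mem_uIcc_of_le (by linarith [hx.1]) hxδ
  rw [intervalIntegral.integral_interval_sub_left (hP.mono_set (uIcc_subset_uIcc_left h2x_mem))
    (hP.mono_set (uIcc_subset_uIcc_left hx_mem))]
  exact h.sub_div_le_integral_inv hx.1 hxℓ

theorem tendsto_sub_div_mul_sq (h : DegWeight x₀ ℓ μ α α') (hxl : x₀ < ℓ) {g g' : ℝ → ℝ}
    {L : ℝ} (hg' : IntervalIntegrable g' volume x₀ ℓ)
    (hg'2 : IntervalIntegrable (fun t => g' t ^ 2) volume x₀ ℓ)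
    (hg : ∀ x ∈ Ioc x₀ ℓ, g x = L + ∫ t in x₀..x, g' t)
    (hint : IntegrableOn (fun t => g t ^ 2 / α t) (Ioo x₀ ℓ)) :
    Tendsto (fun x => (x - x₀) / α x * g x ^ 2) (𝓝[>] x₀) (𝓝 0) := by
  have hg_ev : ∀ᶠ x in 𝓝[>] x₀, L + ∫ t in x₀..x, g' t = g x :=
    eventually_of_mem (Ioc_mem_nhdsGT hxl) fun x hx => (hg x hx).symm
  rcases eq_or_ne L 0 with rfl | hL
  · refine (h.tendsto_sub_div_mul_sq_intervalIntegral hxl hg' hg'2).congr' ?_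
    filter_upwards [hg_ev] with x hx
    rw [← hx, zero_add]
  have hgL : Tendsto g (𝓝[>] x₀) (𝓝 L) := by
    simpa using (tendsto_const_nhds.add (tendsto_intervalIntegral_nhdsGT hxl hg')).congr' hg_ev
  have hinv : IntegrableAtFilter (fun t => (α t)⁻¹) (𝓝[>] x₀) := by
    refine integrableAtFilter_inv_of_tendsto hgL hL ?_ ⟨Ioo x₀ ℓ, Ioo_mem_nhdsGT hxl, hint⟩
    rw [← nhdsWithin_Ioo_eq_nhdsGT hxl]
    exact ((h.2.2.1.mono Ioo_subset_Icc_self).inv₀ fun t ht => (h.1 t (Ioo_subset_Ioc_self ht)).ne')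
      |>.stronglyMeasurableAtFilter_nhdsWithin measurableSet_Ioo _
  simpa using (h.tendsto_sub_div hxl hinv).mul (hgL.pow 2)

end DegWeight

/-- If `α` satisfies (I)-(III) with degeneracy parameter `μ`, then every
`u ∈ V²_α(x₀, ℓ)` satisfies `lim_{x → x₀⁺} (x - x₀)·α(x)·|u'(x)|² = 0`. -/
theorem limit_xau_sq (x₀ ℓ μ : ℝ) (α α' : ℝ → ℝ) (hxl : x₀ < ℓ)
    (h : DegWeight x₀ ℓ μ α α') (u u' g' : ℝ → ℝ) (hu : MemV2 x₀ ℓ α u u' g') :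
    Tendsto (fun x => (x - x₀) * α x * (u' x) ^ 2) (𝓝[>] x₀) (𝓝 0) := by
  obtain ⟨⟨-, -, hsqrt⟩, -, hg'L2, hFTC⟩ := hu
  have hg' : IntervalIntegrable g' volume x₀ ℓ :=
    (intervalIntegrable_iff_integrableOn_Ioo_of_le hxl.le).2 (hg'L2.integrable one_le_two)
  have hg'2 : IntervalIntegrable (fun t => g' t ^ 2) volume x₀ ℓ :=
    (intervalIntegrable_iff_integrableOn_Ioo_of_le hxl.le).2 hg'L2.integrable_sq
  have hrepr : ∀ x ∈ Ioc x₀ ℓ,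
      α x * u' x = (α ℓ * u' ℓ - ∫ t in x₀..ℓ, g' t) + ∫ t in x₀..x, g' t := by
    intro x hx
    have hsub := hg'.mono_set (uIcc_subset_uIcc_left (mem_uIcc_of_le hx.1.le hx.2))
    linarith [intervalIntegral.integral_interval_sub_left hg' hsub, (hFTC x ℓ hx.1 hx.2 le_rfl).2]
  have hint : IntegrableOn (fun t => (α t * u' t) ^ 2 / α t) (Ioo x₀ ℓ) := by
    refine hsqrt.integrable_sq.congr (ae_restrict_of_forall_mem measurableSet_Ioo fun t ht => ?_)
    have hαt := h.1 t (Ioo_subset_Ioc_self ht)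
    simp only [mul_pow, Real.sq_sqrt hαt.le]
    field_simp
  refine (h.tendsto_sub_div_mul_sq hxl hg' hg'2 hrepr hint).congr' ?_
  filter_upwards [Ioc_mem_nhdsGT hxl] with x hx
  field_simp [(h.1 x hx).ne']
end

section
/- Let α satisfy assumptions (I)–(III) with degeneracy parameter μ, and assume α degenerates weakly, i.e. 0 ≤ μ < 1. Then for every u ∈ V²_α(x₀,ℓ) and every φ ∈ V¹_α(x₀,ℓ) with lim_{x → x₀⁺} φ(x) = 0, one has lim_{x → x₀⁺} α(x)·φ(x)·u'(x) = 0. -/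
open MeasureTheory Set Filter Topology

theorem tendsto_nhdsGT_of_sub_eq_intervalIntegral {F g : ℝ → ℝ} {a b : ℝ} (hab : a < b)
    (hg : IntegrableOn g (Ioo a b))
    (hF : ∀ x, a < x → x ≤ b → F b - F x = ∫ t in x..b, g t) :
    Tendsto F (𝓝[>] a) (𝓝 (F b - ∫ t in a..b, g t)) := by
  have hg_Icc : IntegrableOn g (uIcc a b) := by
    rwa [uIcc_of_le hab.le, integrableOn_Icc_iff_integrableOn_Ioo]
  have hprimitive : Tendsto (fun x => ∫ t in x..b, g t) (𝓝[>] a) (𝓝 (∫ t in a..b, g t)) := by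
    rw [← nhdsWithin_Ioo_eq_nhdsGT hab]
    exact ((intervalIntegral.continuousOn_primitive_interval_left hg_Icc).continuousWithinAt
      (by simp [hab.le])).mono (Ioo_subset_Icc_self.trans (uIcc_of_le hab.le).symm.subset)
  refine (tendsto_const_nhds.sub hprimitive).congr' ?_
  filter_upwards [Ioo_mem_nhdsGT hab] with x hx
  linarith [hF x hx.1 hx.2.le]

theorem MemV2.exists_tendsto_mul_deriv {x₀ ℓ : ℝ} {α u u' g' : ℝ → ℝ} (hxl : x₀ < ℓ)
    (hu : MemV2 x₀ ℓ α u u' g') :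
    ∃ L, Tendsto (fun x => α x * u' x) (𝓝[>] x₀) (𝓝 L) := by
  obtain ⟨-, -, hg', hFTC⟩ := hu
  exact ⟨_, tendsto_nhdsGT_of_sub_eq_intervalIntegral hxl (hg'.integrable one_le_two)
    fun x hx hxℓ => (hFTC x ℓ hx hxℓ le_rfl).2⟩

theorem limit_au'phi_weak_general (x₀ ℓ : ℝ) (α : ℝ → ℝ) (hxl : x₀ < ℓ)
    (u u' g' : ℝ → ℝ) (hu : MemV2 x₀ ℓ α u u' g')
    (φ : ℝ → ℝ)
    (hφ0 : Tendsto φ (𝓝[>] x₀) (𝓝 0)) :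
    Tendsto (fun x => α x * φ x * u' x) (𝓝[>] x₀) (𝓝 0) := by
  obtain ⟨L, hL⟩ := hu.exists_tendsto_mul_deriv hxl
  simpa [mul_left_comm, mul_assoc] using hφ0.mul hL

/-- If `α` satisfies (I)-(III) with degeneracy parameter `μ` and degenerates
weakly (`0 ≤ μ < 1`), then for every `u ∈ V²_α(x₀, ℓ)` and every `φ ∈ V¹_α(x₀, ℓ)` with
`lim_{x → x₀⁺} φ(x) = 0` one has `lim_{x → x₀⁺} α(x)·φ(x)·u'(x) = 0`. -/
theorem limit_au'phi_weak (x₀ ℓ μ : ℝ) (α α' : ℝ → ℝ) (hxl : x₀ < ℓ)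
    (h : DegWeight x₀ ℓ μ α α') (hμ0 : 0 ≤ μ) (hμ1 : μ < 1)
    (u u' g' : ℝ → ℝ) (hu : MemV2 x₀ ℓ α u u' g')
    (φ φ' : ℝ → ℝ) (hφ : MemV1 x₀ ℓ α φ φ')
    (hφ0 : Tendsto φ (𝓝[>] x₀) (𝓝 0)) :
    Tendsto (fun x => α x * φ x * u' x) (𝓝[>] x₀) (𝓝 0) :=
  limit_au'phi_weak_general x₀ ℓ α hxl u u' g' hu φ hφ0
end

section
/- Let α satisfy assumptions (I)–(III) with degeneracy parameter μ, and assume 0 ≤ μ < 1. Then every u ∈ V¹_α(x₀,ℓ) extends to a continuous function on the closed interval [x₀,ℓ], and for all x₀ ≤ x < y ≤ ℓ one has |u(y) − u(x)| ≤ (∫_x^y α(s)⁻¹ ds)^{1/2} · (∫_x^y α(s)|u'(s)|² ds)^{1/2}. -/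
open MeasureTheory Set Filter Topology

/-!
The supremum condition gives `(x - x₀) α' x ≤ μ α x`, so `log α x - μ log (x - x₀)` decreases
and `α x ≥ c (x - x₀) ^ μ` on `(x₀, ℓ]`; for `μ < 1` this makes `α⁻¹` integrable up to `x₀`.
Writing `|u'| = α^(-1/2) · √α |u'|`, Cauchy–Schwarz bounds `∫ |u'|` by
`(∫ α⁻¹)^(1/2) (∫ α u'²)^(1/2)`, so `u'` is integrable on `(x₀, ℓ)` and
`v x = u ℓ - ∫_x^ℓ u'` is the continuous extension.
-/

lemma antitoneOn_log_sub_mul_log_sub {f f' : ℝ → ℝ} {a b μ : ℝ}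
    (hf : ∀ x ∈ Ioc a b, HasDerivWithinAt f (f' x) (Ioc a b) x)
    (hpos : ∀ x ∈ Ioc a b, 0 < f x) (hf' : ∀ x ∈ Ioo a b, (x - a) * f' x ≤ μ * f x) :
    AntitoneOn (fun x => Real.log (f x) - μ * Real.log (x - a)) (Ioc a b) := by
  refine antitoneOn_of_hasDerivWithinAt_nonpos (convex_Ioc a b)
    (f' := fun x => f' x / f x - μ * (1 / (x - a))) ?_ (fun y hy => ?_) (fun y hy => ?_)
  · have hcont : ContinuousOn f (Ioc a b) := fun y hy => (hf y hy).continuousWithinAt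
    exact (hcont.log fun y hy => (hpos y hy).ne').sub
      (continuousOn_const.mul ((continuousOn_id.sub continuousOn_const).log
        fun y hy => (sub_pos.2 hy.1).ne'))
  · rw [interior_Ioc] at hy ⊢
    have hlin : HasDerivWithinAt (fun x => x - a) 1 (Ioo a b) y :=
      (hasDerivWithinAt_id y _).sub_const a
    exact ((hf y (Ioo_subset_Ioc_self hy)).mono Ioo_subset_Ioc_self |>.log
      (hpos y (Ioo_subset_Ioc_self hy)).ne').sub
      ((hlin.log (sub_pos.2 hy.1).ne').const_mul μ)
  · rw [interior_Ioc] at hy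
    rw [sub_nonpos, mul_one_div,
      div_le_div_iff₀ (hpos y (Ioo_subset_Ioc_self hy)) (sub_pos.2 hy.1)]
    linarith [hf' y hy]

lemma div_rpow_mul_rpow_le_of_sub_mul_deriv_le {f f' : ℝ → ℝ} {a b μ : ℝ}
    (hf : ∀ x ∈ Ioc a b, HasDerivWithinAt f (f' x) (Ioc a b) x)
    (hpos : ∀ x ∈ Ioc a b, 0 < f x) (hf' : ∀ x ∈ Ioo a b, (x - a) * f' x ≤ μ * f x)
    {x : ℝ} (hx : x ∈ Ioc a b) :
    f b / (b - a) ^ μ * (x - a) ^ μ ≤ f x := by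
  have hb : b ∈ Ioc a b := right_mem_Ioc.2 (hx.1.trans_le hx.2)
  have hlog := antitoneOn_log_sub_mul_log_sub hf hpos hf' hx hb hx.2
  have hxa : 0 < x - a := sub_pos.2 hx.1
  have hba : 0 < b - a := sub_pos.2 (hx.1.trans_le hx.2)
  have hfb := hpos b hb
  rw [← Real.log_le_log_iff (by positivity) (hpos x hx), Real.log_mul (by positivity)
    (by positivity), Real.log_div hfb.ne' (by positivity), Real.log_rpow hba, Real.log_rpow hxa]
  linarith

lemma integrableOn_inv_of_mul_rpow_le {f : ℝ → ℝ} {a b c μ : ℝ} (hμ : μ < 1) (hc : 0 < c)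
    (hf : ContinuousOn f (Ioo a b)) (hle : ∀ x ∈ Ioo a b, c * (x - a) ^ μ ≤ f x) :
    IntegrableOn (fun x => (f x)⁻¹) (Ioo a b) := by
  rcases le_or_gt b a with hba | hab
  · simp [Ioo_eq_empty_of_le hba]
  have hpow : IntegrableOn (fun x => c⁻¹ * (x - a) ^ (-μ)) (Ioo a b) := by
    have h := (intervalIntegral.intervalIntegrable_rpow' (r := -μ) (by linarith)
      (a := 0) (b := b - a)).comp_sub_right a
    rw [zero_add, sub_add_cancel] at h
    exact (intervalIntegrable_iff_integrableOn_Ioo_of_le hab.le).1 (h.const_mul c⁻¹)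
  refine hpow.mono' ((hf.inv₀ fun x hx => ?_).aestronglyMeasurable measurableSet_Ioo) ?_
  · have hxa : 0 < x - a := sub_pos.2 hx.1
    exact (lt_of_lt_of_le (by positivity) (hle x hx)).ne'
  · refine ae_restrict_of_forall_mem measurableSet_Ioo fun x hx => ?_
    have hxa : 0 < x - a := sub_pos.2 hx.1
    have hpos : 0 < c * (x - a) ^ μ := by positivity
    rw [Real.norm_of_nonneg (inv_nonneg.2 (hpos.trans_le (hle x hx)).le), Real.rpow_neg hxa.le,
      ← mul_inv]
    exact inv_anti₀ hpos (hle x hx)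

section WeightedCauchySchwarz

variable {X : Type*} [MeasurableSpace X] {ν : Measure X} {w g : X → ℝ}

lemma memLp_two_inv_sqrt (hw : ∀ᵐ x ∂ν, 0 < w x) (hw_meas : AEStronglyMeasurable w ν)
    (hinv : Integrable (fun x => (w x)⁻¹) ν) :
    MemLp (fun x => (√(w x))⁻¹) 2 ν := by
  refine (memLp_two_iff_integrable_sq hw_meas.aemeasurable.sqrt.inv.aestronglyMeasurable).2
    (hinv.congr ?_)
  filter_upwards [hw] with x hx
  rw [Pi.inv_apply, inv_pow, Real.sq_sqrt hx.le]

lemma inv_sqrt_mul_sqrt_mul_ae_eq (hw : ∀ᵐ x ∂ν, 0 < w x) :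
    (fun x => (√(w x))⁻¹ * (√(w x) * g x)) =ᵐ[ν] g := by
  filter_upwards [hw] with x hx
  rw [inv_mul_cancel_left₀ (Real.sqrt_pos.2 hx).ne']

lemma integrable_of_memLp_sqrt_mul (hw : ∀ᵐ x ∂ν, 0 < w x) (hw_meas : AEStronglyMeasurable w ν)
    (hinv : Integrable (fun x => (w x)⁻¹) ν) (hg : MemLp (fun x => √(w x) * g x) 2 ν) :
    Integrable g ν :=
  ((memLp_two_inv_sqrt hw hw_meas hinv).integrable_mul hg).congr
    (inv_sqrt_mul_sqrt_mul_ae_eq hw)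

lemma integral_abs_le_sqrt_integral_inv_mul_sqrt_integral_mul_sq (hw : ∀ᵐ x ∂ν, 0 < w x)
    (hw_meas : AEStronglyMeasurable w ν) (hinv : Integrable (fun x => (w x)⁻¹) ν)
    (hg : MemLp (fun x => √(w x) * g x) 2 ν) :
    ∫ x, |g x| ∂ν ≤ √(∫ x, (w x)⁻¹ ∂ν) * √(∫ x, w x * g x ^ 2 ∂ν) := by
  have hinv' := memLp_two_inv_sqrt hw hw_meas hinv
  rw [← ENNReal.ofReal_ofNat] at hinv' hg
  have holder := integral_mul_norm_le_Lp_mul_Lq Real.HolderConjugate.two_two hinv' hg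
  have hlhs : ∫ x, ‖(√(w x))⁻¹‖ * ‖√(w x) * g x‖ ∂ν = ∫ x, |g x| ∂ν := by
    refine integral_congr_ae ?_
    filter_upwards [inv_sqrt_mul_sqrt_mul_ae_eq hw] with x hx
    rw [← norm_mul, hx, Real.norm_eq_abs]
  have hinv_sq : ∫ x, ‖(√(w x))⁻¹‖ ^ (2 : ℝ) ∂ν = ∫ x, (w x)⁻¹ ∂ν := by
    refine integral_congr_ae ?_
    filter_upwards [hw] with x hx
    rw [Real.rpow_two, Real.norm_eq_abs, sq_abs, inv_pow, Real.sq_sqrt hx.le]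
  have hg_sq : ∫ x, ‖√(w x) * g x‖ ^ (2 : ℝ) ∂ν = ∫ x, w x * g x ^ 2 ∂ν := by
    refine integral_congr_ae ?_
    filter_upwards [hw] with x hx
    rw [Real.rpow_two, Real.norm_eq_abs, sq_abs, mul_pow, Real.sq_sqrt hx.le]
  rwa [hlhs, hinv_sq, hg_sq, ← Real.sqrt_eq_rpow, ← Real.sqrt_eq_rpow] at holder

end WeightedCauchySchwarz

lemma exists_continuousOn_eq_sub_integral {u u' : ℝ → ℝ} {a b : ℝ} (hab : a ≤ b)
    (hu' : IntegrableOn u' (Icc a b)) (hu : ∀ x ∈ Ioc a b, u b - u x = ∫ t in x..b, u' t) :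
    ∃ v : ℝ → ℝ, ContinuousOn v (Icc a b) ∧ (∀ x ∈ Ioc a b, v x = u x) ∧
      ∀ x y, a ≤ x → x ≤ y → y ≤ b → v y - v x = ∫ t in x..y, u' t := by
  have hII : ∀ x y, a ≤ x → x ≤ y → y ≤ b → IntervalIntegrable u' volume x y :=
    fun x y hx hxy hy => (intervalIntegrable_iff_integrableOn_Icc_of_le hxy).2
      (hu'.mono_set (Icc_subset_Icc hx hy))
  refine ⟨fun x => u b - ∫ t in x..b, u' t, ?_, fun x hx => by linarith [hu x hx],
    fun x y hx hxy hy => ?_⟩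
  · have hprim := intervalIntegral.continuousOn_primitive_interval_left
      (by rwa [uIcc_of_le hab] : IntegrableOn u' (uIcc a b))
    rw [uIcc_of_le hab] at hprim
    exact continuousOn_const.sub hprim
  · linarith [intervalIntegral.integral_add_adjacent_intervals (hII x y hx hxy hy)
      (hII y b (hx.trans hxy) hy le_rfl)]

namespace DegWeight

variable {x₀ ℓ μ : ℝ} {α α' : ℝ → ℝ}

lemma sub_mul_deriv_le (h : DegWeight x₀ ℓ μ α α') {x : ℝ} (hx : x ∈ Ioc x₀ ℓ) :
    (x - x₀) * α' x ≤ μ * α x := by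
  obtain ⟨hpos, -, -, -, -, hlub, -⟩ := h
  have hsup : (x - x₀) * |α' x| / α x ≤ μ := hlub.1 ⟨x, hx, rfl⟩
  rw [div_le_iff₀ (hpos x hx)] at hsup
  exact (mul_le_mul_of_nonneg_left (le_abs_self _) (sub_pos.2 hx.1).le).trans hsup

lemma integrableOn_inv (h : DegWeight x₀ ℓ μ α α') (hxℓ : x₀ < ℓ) (hμ : μ < 1) :
    IntegrableOn (fun x => (α x)⁻¹) (Ioo x₀ ℓ) := by
  have hderiv_le : ∀ x ∈ Ioo x₀ ℓ, (x - x₀) * α' x ≤ μ * α x :=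
    fun _ hx => h.sub_mul_deriv_le (Ioo_subset_Ioc_self hx)
  obtain ⟨hpos, -, hcont, hderiv, -⟩ := h
  exact integrableOn_inv_of_mul_rpow_le hμ
    (div_pos (hpos ℓ (right_mem_Ioc.2 hxℓ)) (Real.rpow_pos_of_pos (sub_pos.2 hxℓ) μ))
    (hcont.mono Ioo_subset_Icc_self) fun _ hx =>
      div_rpow_mul_rpow_le_of_sub_mul_deriv_le hderiv hpos hderiv_le (Ioo_subset_Ioc_self hx)

end DegWeight

theorem continuous_extension_general (x₀ ℓ μ : ℝ) (α α' : ℝ → ℝ) (hxl : x₀ < ℓ)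
    (h : DegWeight x₀ ℓ μ α α') (hμ1 : μ < 1)
    (u u' : ℝ → ℝ) (hu : MemV1 x₀ ℓ α u u') :
    ∃ v : ℝ → ℝ, ContinuousOn v (Icc x₀ ℓ) ∧ (∀ x ∈ Ioc x₀ ℓ, v x = u x) ∧
      ∀ x y : ℝ, x₀ ≤ x → x < y → y ≤ ℓ →
        |v y - v x| ≤ Real.sqrt (∫ s in Ioo x y, (α s)⁻¹) *
          Real.sqrt (∫ s in Ioo x y, α s * (u' s) ^ 2) := by
  obtain ⟨-, hFTC, hαu'⟩ := hu
  have hinv := h.integrableOn_inv hxl hμ1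
  obtain ⟨hpos, -, hcont, -⟩ := h
  have hαpos : ∀ᵐ x ∂(volume.restrict (Ioo x₀ ℓ)), 0 < α x :=
    ae_restrict_of_forall_mem measurableSet_Ioo fun x hx => hpos x (Ioo_subset_Ioc_self hx)
  have hα_meas : AEStronglyMeasurable α (volume.restrict (Ioo x₀ ℓ)) :=
    (hcont.mono Ioo_subset_Icc_self).aestronglyMeasurable measurableSet_Ioo
  have hu'_int : IntegrableOn u' (Icc x₀ ℓ) := (integrableOn_Icc_iff_integrableOn_Ioo).2
    (integrable_of_memLp_sqrt_mul hαpos hα_meas hinv hαu')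
  obtain ⟨v, hv_cont, hv_eq, hv_sub⟩ := exists_continuousOn_eq_sub_integral hxl.le hu'_int
    fun x hx => (hFTC x ℓ hx.1 hx.2 le_rfl).2
  refine ⟨v, hv_cont, hv_eq, fun x y hx hxy hyℓ => ?_⟩
  have hrestrict : volume.restrict (Ioo x y) ≤ volume.restrict (Ioo x₀ ℓ) :=
    Measure.restrict_mono (Ioo_subset_Ioo hx hyℓ) le_rfl
  calc |v y - v x| ≤ ∫ t in Ioo x y, |u' t| := by
        rw [hv_sub x y hx hxy.le hyℓ, intervalIntegral.integral_of_le hxy.le,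
          integral_Ioc_eq_integral_Ioo, ← Real.norm_eq_abs]
        exact norm_integral_le_integral_norm _
    _ ≤ _ := integral_abs_le_sqrt_integral_inv_mul_sqrt_integral_mul_sq
        (ae_mono hrestrict hαpos) (hα_meas.mono_measure hrestrict)
        (Integrable.mono_measure hinv hrestrict) (hαu'.mono_measure hrestrict)

/-- If `α` satisfies (I)-(III) with degeneracy parameter `μ` and `0 ≤ μ < 1`,
then every `u ∈ V¹_α(x₀, ℓ)` extends to a continuous function `v` on `[x₀, ℓ]`, and for all
`x₀ ≤ x < y ≤ ℓ` one has
`|u(y) - u(x)| ≤ (∫_x^y α(s)⁻¹ ds)^{1/2} · (∫_x^y α(s)|u'(s)|² ds)^{1/2}`. -/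
theorem continuous_extension (x₀ ℓ μ : ℝ) (α α' : ℝ → ℝ) (hxl : x₀ < ℓ)
    (h : DegWeight x₀ ℓ μ α α') (hμ0 : 0 ≤ μ) (hμ1 : μ < 1)
    (u u' : ℝ → ℝ) (hu : MemV1 x₀ ℓ α u u') :
    ∃ v : ℝ → ℝ, ContinuousOn v (Icc x₀ ℓ) ∧ (∀ x ∈ Ioc x₀ ℓ, v x = u x) ∧
      ∀ x y : ℝ, x₀ ≤ x → x < y → y ≤ ℓ →
        |v y - v x| ≤ Real.sqrt (∫ s in Ioo x y, (α s)⁻¹) *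
          Real.sqrt (∫ s in Ioo x y, α s * (u' s) ^ 2) :=
  continuous_extension_general x₀ ℓ μ α α' hxl h hμ1 u u' hu
end

section
/- Let 0 ≤ μ < 1 and 0 < η ≤ 1. Suppose u : (0,η] → ℂ is locally absolutely continuous with ∫₀^η x^μ |u'(x)|² dx < ∞. Then u has a continuous extension to [0,η], denoted u(0), and |u(η) − u(0)| ≤ (1 − μ)^{−1/2} · η^{(1−μ)/2} · (∫₀^η x^μ |u'(x)|² dx)^{1/2}. -/
open MeasureTheory Set Filter Topology

/-!
Writing `|u'| = t^{-μ/2} · t^{μ/2}|u'|`, Cauchy–Schwarz on `[x, y] ⊆ (0, η]` gives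
`|u y - u x| ≤ (∫ₓʸ t^{-μ} dt)^{1/2} (∫ₓʸ t^μ |u'|²)^{1/2} ≤ (1-μ)^{-1/2} y^{(1-μ)/2} I^{1/2}`
with `I = ∫₀^η t^μ |u'|²`, since `t^{-μ}` is integrable at `0` for `μ < 1`. The bound tends to `0` with `y`, so `u` is
Cauchy at `0⁺`; letting `x → 0` with `y = η` gives the estimate.
-/

theorem integral_mul_le_sqrt_mul_sqrt {α : Type*} [MeasurableSpace α] {ν : Measure α}
    {f g : α → ℝ} (hf : 0 ≤ᵐ[ν] f) (hg : 0 ≤ᵐ[ν] g)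
    (hf_meas : AEStronglyMeasurable f ν) (hg_meas : AEStronglyMeasurable g ν)
    (hf2 : Integrable (fun a => f a ^ 2) ν) (hg2 : Integrable (fun a => g a ^ 2) ν) :
    ∫ a, f a * g a ∂ν ≤ √(∫ a, f a ^ 2 ∂ν) * √(∫ a, g a ^ 2 ∂ν) := by
  have two : ENNReal.ofReal 2 = 2 := by norm_num
  have holder := integral_mul_le_Lp_mul_Lq_of_nonneg Real.HolderConjugate.two_two hf hg
    (two ▸ (memLp_two_iff_integrable_sq hf_meas).2 hf2)
    (two ▸ (memLp_two_iff_integrable_sq hg_meas).2 hg2)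
  simpa only [Real.rpow_two, Real.sqrt_eq_rpow, one_div] using holder

theorem integral_norm_le_sqrt_mul_sqrt_weighted {E : Type*} [NormedAddCommGroup E]
    {s : Set ℝ} (hs : MeasurableSet s) (hs0 : s ⊆ Ioi 0) (μ : ℝ) {f : ℝ → E}
    (hf : AEStronglyMeasurable f (volume.restrict s))
    (hw : IntegrableOn (fun t => t ^ (-μ)) s)
    (hfw : IntegrableOn (fun t => t ^ μ * ‖f t‖ ^ 2) s) :
    ∫ t in s, ‖f t‖ ≤ √(∫ t in s, t ^ (-μ)) * √(∫ t in s, t ^ μ * ‖f t‖ ^ 2) := by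
  have hpos : ∀ᵐ t ∂volume.restrict s, 0 < t :=
    (ae_restrict_mem hs).mono fun t ht => hs0 ht
  have hcont (c : ℝ) : ContinuousOn (fun t : ℝ => t ^ c) s := fun t ht =>
    (Real.continuousAt_rpow_const t c (Or.inl (hs0 ht).ne')).continuousWithinAt
  have hsplit : ∀ᵐ t ∂volume.restrict s, t ^ (-(μ / 2)) * (t ^ (μ / 2) * ‖f t‖) = ‖f t‖ := by
    filter_upwards [hpos] with t ht
    rw [← mul_assoc, ← Real.rpow_add ht, neg_add_cancel, Real.rpow_zero, one_mul]
  have hsq_left : ∀ᵐ t ∂volume.restrict s, (t ^ (-(μ / 2))) ^ 2 = t ^ (-μ) := by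
    filter_upwards [hpos] with t ht
    rw [← Real.rpow_natCast, ← Real.rpow_mul ht.le]
    norm_num
  have hsq_right : ∀ᵐ t ∂volume.restrict s, (t ^ (μ / 2) * ‖f t‖) ^ 2 = t ^ μ * ‖f t‖ ^ 2 := by
    filter_upwards [hpos] with t ht
    rw [mul_pow, ← Real.rpow_natCast, ← Real.rpow_mul ht.le]
    norm_num
  have cs := integral_mul_le_sqrt_mul_sqrt (ν := volume.restrict s)
    (f := fun t => t ^ (-(μ / 2))) (g := fun t => t ^ (μ / 2) * ‖f t‖)
    (hpos.mono fun t ht => Real.rpow_nonneg ht.le _)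
    (hpos.mono fun t ht => mul_nonneg (Real.rpow_nonneg ht.le _) (norm_nonneg _))
    ((hcont _).aestronglyMeasurable hs) (((hcont _).aestronglyMeasurable hs).mul hf.norm)
    (hw.congr (hsq_left.mono fun _ h => h.symm)) (hfw.congr (hsq_right.mono fun _ h => h.symm))
  rwa [integral_congr_ae hsplit, integral_congr_ae hsq_left, integral_congr_ae hsq_right] at cs

theorem intervalIntegral_rpow_neg_le {μ x y : ℝ} (hμ : μ < 1) (hx : 0 ≤ x) :
    ∫ t in x..y, t ^ (-μ) ≤ y ^ (1 - μ) / (1 - μ) := by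
  rw [integral_rpow (Or.inl (by linarith)), show -μ + 1 = 1 - μ by ring]
  have : 0 ≤ x ^ (1 - μ) := Real.rpow_nonneg hx _
  gcongr
  linarith

theorem sqrt_rpow_div_self {c x : ℝ} (hc : 0 < c) (hx : 0 ≤ x) :
    √(x ^ c / c) = c ^ (-(1 : ℝ) / 2) * x ^ (c / 2) := by
  rw [Real.sqrt_eq_rpow, Real.div_rpow (Real.rpow_nonneg hx _) hc.le, ← Real.rpow_mul hx,
    neg_div, Real.rpow_neg hc.le]
  ring_nf

theorem norm_intervalIntegral_le_of_weighted_sq {E : Type*} [NormedAddCommGroup E]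
    [NormedSpace ℝ E] {μ x y : ℝ} (hμ : μ < 1) (hx : 0 < x) (hxy : x ≤ y) {f : ℝ → E}
    (hf : IntervalIntegrable f volume x y)
    (hfw : IntegrableOn (fun t => t ^ μ * ‖f t‖ ^ 2) (Ioc x y)) :
    ‖∫ t in x..y, f t‖ ≤
      (1 - μ) ^ (-(1 : ℝ) / 2) * y ^ ((1 - μ) / 2) * √(∫ t in Ioc x y, t ^ μ * ‖f t‖ ^ 2) := by
  have hw : IntegrableOn (fun t : ℝ => t ^ (-μ)) (Ioc x y) :=
    (intervalIntegrable_iff_integrableOn_Ioc_of_le hxy).1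
      (intervalIntegral.intervalIntegrable_rpow' (by linarith))
  have hweight : √(∫ t in Ioc x y, t ^ (-μ)) ≤ (1 - μ) ^ (-(1 : ℝ) / 2) * y ^ ((1 - μ) / 2) := by
    rw [← sqrt_rpow_div_self (by linarith) (hx.le.trans hxy), ← intervalIntegral.integral_of_le hxy]
    exact Real.sqrt_le_sqrt (intervalIntegral_rpow_neg_le hμ hx.le)
  calc ‖∫ t in x..y, f t‖ ≤ ∫ t in Ioc x y, ‖f t‖ := by
        rw [← intervalIntegral.integral_of_le hxy]
        exact intervalIntegral.norm_integral_le_integral_norm hxy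
    _ ≤ √(∫ t in Ioc x y, t ^ (-μ)) * √(∫ t in Ioc x y, t ^ μ * ‖f t‖ ^ 2) :=
        integral_norm_le_sqrt_mul_sqrt_weighted measurableSet_Ioc (fun t ht => hx.trans ht.1) μ
          hf.1.aestronglyMeasurable hw hfw
    _ ≤ _ := by gcongr

theorem exists_tendsto_nhdsGT_of_norm_sub_le {E : Type*} [NormedAddCommGroup E] [CompleteSpace E]
    {u : ℝ → E} {b : ℝ → ℝ} {a η : ℝ} (haη : a < η) (hb : Tendsto b (𝓝[>] a) (𝓝 0))
    (hu : ∀ x y, a < x → x ≤ y → y < η → ‖u y - u x‖ ≤ b y) :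
    ∃ L, Tendsto u (𝓝[>] a) (𝓝 L) := by
  refine cauchy_map_iff_exists_tendsto.1 (Metric.cauchy_iff.2 ⟨map_neBot, fun ε hε => ?_⟩)
  refine ⟨u '' ({y | b y < ε} ∩ Ioo a η),
    image_mem_map (inter_mem (hb.eventually_lt_const hε) (Ioo_mem_nhdsGT haη)), ?_⟩
  rintro _ ⟨x, hx, rfl⟩ _ ⟨y, hy, rfl⟩
  rcases le_total x y with hxy | hyx
  · rw [dist_comm, dist_eq_norm]
    exact (hu x y hx.2.1 hxy hy.2.2).trans_lt hy.1
  · rw [dist_eq_norm]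
    exact (hu y x hy.2.1 hyx hx.2.2).trans_lt hx.1

theorem extension_estimate_general (μ η : ℝ) (hμ1 : μ < 1)
    (hη0 : 0 < η) (u u' : ℝ → ℂ)
    (hac : ∀ x y : ℝ, 0 < x → x ≤ y → y ≤ η →
      IntervalIntegrable u' volume x y ∧ u y - u x = ∫ t in x..y, u' t)
    (hint : IntegrableOn (fun x => x ^ μ * ‖u' x‖ ^ 2) (Ioo 0 η) volume) :
    ∃ L : ℂ, Tendsto u (𝓝[>] (0 : ℝ)) (𝓝 L) ∧
      ‖u η - L‖ ≤ (1 - μ) ^ (-(1 : ℝ) / 2) * η ^ ((1 - μ) / 2) *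
        Real.sqrt (∫ x in Ioo (0 : ℝ) η, x ^ μ * ‖u' x‖ ^ 2) := by
  set I := ∫ x in Ioo (0 : ℝ) η, x ^ μ * ‖u' x‖ ^ 2
  set b : ℝ → ℝ := fun y => (1 - μ) ^ (-(1 : ℝ) / 2) * y ^ ((1 - μ) / 2) * √I
  have hu : ∀ x y, 0 < x → x ≤ y → y ≤ η → ‖u y - u x‖ ≤ b y := by
    intro x y hx hxy hyη
    obtain ⟨hu'int, hFTC⟩ := hac x y hx hxy hyη
    have hsub : Ioc x y ≤ᵐ[volume] Ioo 0 η :=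
      (Ioc_subset_Ioc hx.le hyη).eventuallyLE.trans Ioo_ae_eq_Ioc.symm.le
    rw [hFTC]
    refine (norm_intervalIntegral_le_of_weighted_sq hμ1 hx hxy hu'int
      (hint.mono_set_ae hsub)).trans ?_
    dsimp only [b]
    gcongr ?_ * √?_
    · exact mul_nonneg (Real.rpow_nonneg (by linarith) _) (Real.rpow_nonneg (by linarith) _)
    refine setIntegral_mono_set hint ?_ hsub
    filter_upwards [ae_restrict_mem measurableSet_Ioo] with t ht
    exact mul_nonneg (Real.rpow_nonneg ht.1.le _) (sq_nonneg _)
  have hb : Tendsto b (𝓝[>] 0) (𝓝 0) := by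
    have hcont : ContinuousAt b 0 :=
      ((Real.continuousAt_rpow_const 0 _ (Or.inr (by linarith))).const_mul _).mul_const _
    simpa [b, Real.zero_rpow (show (1 - μ) / 2 ≠ 0 by linarith)] using
      hcont.tendsto.mono_left nhdsWithin_le_nhds
  obtain ⟨L, hL⟩ := exists_tendsto_nhdsGT_of_norm_sub_le hη0 hb
    fun x y hx hxy hy => hu x y hx hxy hy.le
  refine ⟨L, hL, le_of_tendsto (tendsto_const_nhds.sub hL).norm ?_⟩
  filter_upwards [Ioo_mem_nhdsGT hη0] with x hx
  exact hu x η hx.1 hx.2.le le_rfl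

/-- Let `0 ≤ μ < 1` and `0 < η ≤ 1`. If `u : (0, η] → ℂ` is locally
absolutely continuous with a.e. derivative `u'` and `∫₀^η x^μ |u'(x)|² dx < ∞`, then `u` has a
continuous extension to `[0, η]` (i.e. a limit `L = u(0)` at `0⁺`) and
`|u(η) - u(0)| ≤ (1 - μ)^{-1/2} · η^{(1-μ)/2} · (∫₀^η x^μ |u'(x)|² dx)^{1/2}`. -/
theorem extension_estimate (μ η : ℝ) (hμ0 : 0 ≤ μ) (hμ1 : μ < 1)
    (hη0 : 0 < η) (hη1 : η ≤ 1) (u u' : ℝ → ℂ)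
    (hac : ∀ x y : ℝ, 0 < x → x ≤ y → y ≤ η →
      IntervalIntegrable u' volume x y ∧ u y - u x = ∫ t in x..y, u' t)
    (hint : IntegrableOn (fun x => x ^ μ * ‖u' x‖ ^ 2) (Ioo 0 η) volume) :
    ∃ L : ℂ, Tendsto u (𝓝[>] (0 : ℝ)) (𝓝 L) ∧
      ‖u η - L‖ ≤ (1 - μ) ^ (-(1 : ℝ) / 2) * η ^ ((1 - μ) / 2) *
        Real.sqrt (∫ x in Ioo (0 : ℝ) η, x ^ μ * ‖u' x‖ ^ 2) :=
  extension_estimate_general μ η hμ1 hη0 u u' hac hint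
end
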